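/- arXiv:2410.17444 — 8 statements merged into one kernel-verified Lean document; each statement's English description precedes it below -/
import Mathlib

section
/- Let v ∼ F and c ∼ G be independent nonnegative random variables with finite expectations, and fix prices p ≥ q ≥ 0. Define GFT(p,q) = E[(v − c)·1{v ≥ p}·1{c ≤ q}], Profit(p,q) = (p − q)·(1 − F(p))·G(q), and FB = E[(v − c)·1{v ≥ c}]. Then GFT(p,q) ≥ Profit(p,q) + min(G(q), 1 − F(p))·(FB − ∫_q^p G(x)·(1 − F(x)) dx). -/
open MeasureTheory Set Filter ENNReal

lemma key_fubini' (μ ν : Measure ℝ) [SFinite μ] [SFinite ν] :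
    ∫⁻ z : ℝ × ℝ, volume (Set.Ico z.2 z.1) ∂(μ.prod ν)
      = ∫⁻ x, ν (Set.Iic x) * μ (Set.Ioi x) := by
  have hrw : ∀ z : ℝ × ℝ, volume (Set.Ico z.2 z.1)
      = ∫⁻ x, (Set.Ioi x ×ˢ Set.Iic x).indicator 1 z ∂volume := by
    intro z
    rw [← lintegral_indicator_one measurableSet_Ico]
    congr 1
    ext x
    simp only [Set.indicator_apply, Set.mem_Ico, Set.mem_prod, Set.mem_Ioi, Set.mem_Iic,
      Pi.one_apply]
    by_cases h : z.2 ≤ x ∧ x < z.1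
    · simp [h.1, h.2]
    · rw [if_neg h, if_neg (fun hh => h ⟨hh.2, hh.1⟩)]
  simp_rw [hrw]
  rw [lintegral_lintegral_swap]
  · congr 1; ext x
    rw [lintegral_indicator_one (measurableSet_Ioi.prod measurableSet_Iic),
      Measure.prod_prod, mul_comm]
  · have heq : Function.uncurry (fun (z : ℝ × ℝ) (x : ℝ) =>
        (Set.Ioi x ×ˢ Set.Iic x).indicator (1 : ℝ × ℝ → ℝ≥0∞) z)
        = ({w : (ℝ×ℝ)×ℝ | w.2 < w.1.1 ∧ w.1.2 ≤ w.2}).indicator 1 := by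
      ext w
      show (Set.Ioi w.2 ×ˢ Set.Iic w.2).indicator 1 w.1 = _
      simp [Set.indicator_apply, Set.mem_prod]
    rw [heq]
    exact (measurable_const.indicator
      ((measurableSet_lt measurable_snd (measurable_fst.fst)).inter
        (measurableSet_le (measurable_fst.snd) measurable_snd))).aemeasurable

lemma meas_vol : Measurable fun z : ℝ × ℝ => volume (Set.Ico z.2 z.1) := by
  simp_rw [Real.volume_Ico]
  exact ENNReal.measurable_ofReal.comp (measurable_fst.sub measurable_snd)

lemma lint_A (μ : Measure ℝ) [SFinite μ] (p : ℝ) :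
    ∫⁻ v, volume (Set.Ico p v) ∂μ = ∫⁻ x in Set.Ici p, μ (Set.Ioi x) ∂volume := by
  have h1 : ∫⁻ v, volume (Set.Ico p v) ∂μ
      = ∫⁻ z : ℝ × ℝ, volume (Set.Ico z.2 z.1) ∂(μ.prod (Measure.dirac p)) := by
    rw [Measure.prod_dirac]
    exact (lintegral_map meas_vol measurable_prodMk_right).symm
  rw [h1, key_fubini', ← lintegral_indicator measurableSet_Ici]
  apply lintegral_congr
  intro x
  rw [Measure.dirac_apply' _ measurableSet_Iic]
  by_cases h : p ≤ x
  · simp [Set.indicator_apply, h]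
  · simp [Set.indicator_apply, h]

lemma lint_B (ν : Measure ℝ) [SFinite ν] (q : ℝ) :
    ∫⁻ c, volume (Set.Ico c q) ∂ν = ∫⁻ x in Set.Iio q, ν (Set.Iic x) ∂volume := by
  have h1 : ∫⁻ c, volume (Set.Ico c q) ∂ν
      = ∫⁻ z : ℝ × ℝ, volume (Set.Ico z.2 z.1) ∂((Measure.dirac q).prod ν) := by
    rw [Measure.dirac_prod]
    exact (lintegral_map meas_vol measurable_prodMk_left).symm
  rw [h1, key_fubini', ← lintegral_indicator measurableSet_Iio]
  apply lintegral_congr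
  intro x
  rw [Measure.dirac_apply' _ measurableSet_Ioi]
  by_cases h : x < q
  · simp [Set.indicator_apply, h]
  · simp [Set.indicator_apply, h]

set_option maxHeartbeats 1000000 in
theorem stmt4 (μ ν : Measure ℝ) [IsProbabilityMeasure μ] [IsProbabilityMeasure ν]
    (hμ : μ (Set.Iio 0) = 0) (hν : ν (Set.Iio 0) = 0)
    (hμint : Integrable id μ) (hνint : Integrable id ν)
    (F G : ℝ → ℝ) (hF : ∀ v, F v = (μ (Set.Iic v)).toReal)
    (hG : ∀ c, G c = (ν (Set.Iic c)).toReal)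
    (p q : ℝ) (hq : 0 ≤ q) (hpq : q ≤ p) :
    (∫ z : ℝ × ℝ, (if p ≤ z.1 ∧ z.2 ≤ q then z.1 - z.2 else 0) ∂(μ.prod ν))
      ≥ (p - q) * (1 - F p) * G q
        + min (G q) (1 - F p) *
          ((∫ z : ℝ × ℝ, (if z.2 ≤ z.1 then z.1 - z.2 else 0) ∂(μ.prod ν))
            - ∫ x in q..p, G x * (1 - F x)) := by
  have hp0 : (0:ℝ) ≤ p := le_trans hq hpq
  -- measurability
  have hGm : Measurable fun x : ℝ => ν (Set.Iic x) :=
    Monotone.measurable (fun _ _ hab => measure_mono (Set.Iic_subset_Iic.2 hab))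
  have hFm : Measurable fun x : ℝ => μ (Set.Ioi x) :=
    Antitone.measurable (fun _ _ hab => measure_mono (Set.Ioi_subset_Ioi hab))
  have hHm : Measurable fun x : ℝ => ν (Set.Iic x) * μ (Set.Ioi x) := hGm.mul hFm
  have hne : ∀ x : ℝ, ν (Set.Iic x) * μ (Set.Ioi x) ≠ ∞ :=
    fun x => ENNReal.mul_ne_top (measure_ne_top ν _) (measure_ne_top μ _)
  have hIoi : ∀ x : ℝ, (μ (Set.Ioi x)).toReal = 1 - (μ (Set.Iic x)).toReal := by
    intro x
    have h1 : μ (Set.Ioi x) = 1 - μ (Set.Iic x) := by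
      rw [← Set.compl_Iic, measure_compl measurableSet_Iic (measure_ne_top μ _), measure_univ]
    rw [h1, ENNReal.toReal_sub_of_le prob_le_one one_ne_top, ENNReal.toReal_one]
  have hFp : 1 - F p = (μ (Set.Ioi p)).toReal := by rw [hF, hIoi]
  have hFG : ∀ x : ℝ, G x * (1 - F x) = (ν (Set.Iic x) * μ (Set.Ioi x)).toReal := by
    intro x
    rw [hG, hF, ENNReal.toReal_mul, ← hIoi]
  -- first moment finiteness
  have hEμ : ∫⁻ v, ENNReal.ofReal v ∂μ < ∞ :=
    lt_of_le_of_lt (lintegral_mono fun v => Real.ofReal_le_enorm v) hμint.2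
  have hEν : ∫⁻ c, ENNReal.ofReal (q - c) ∂ν < ∞ := by
    refine lt_of_le_of_lt (lintegral_mono fun c =>
      (?_ : ENNReal.ofReal (q - c) ≤ ENNReal.ofReal q + (‖c‖₊ : ℝ≥0∞))) ?_
    · calc ENNReal.ofReal (q - c) ≤ ENNReal.ofReal (q + ‖c‖) := by
            apply ENNReal.ofReal_le_ofReal
            have := neg_abs_le c
            rw [Real.norm_eq_abs]; linarith
        _ ≤ ENNReal.ofReal q + ENNReal.ofReal ‖c‖ := ENNReal.ofReal_add_le
        _ ≤ ENNReal.ofReal q + (‖c‖₊ : ℝ≥0∞) := by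
            gcongr; exact le_of_eq (ofReal_norm c)
    · rw [lintegral_add_left measurable_const, lintegral_const, measure_univ, mul_one]
      exact ENNReal.add_lt_top.2 ⟨ENNReal.ofReal_lt_top, hνint.2⟩
  have hLA : ∫⁻ x in Set.Ici p, μ (Set.Ioi x) ∂volume < ∞ := by
    rw [← lint_A]
    refine lt_of_le_of_lt (lintegral_mono fun v => ?_) hEμ
    rw [Real.volume_Ico]
    exact ENNReal.ofReal_le_ofReal (by linarith)
  have hLB : ∫⁻ x in Set.Iio q, ν (Set.Iic x) ∂volume < ∞ := by
    rw [← lint_B]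
    refine lt_of_le_of_lt (lintegral_mono fun c => ?_) hEν
    rw [Real.volume_Ico]
  have hνneg : ∀ x : ℝ, x < 0 → ν (Set.Iic x) = 0 := fun x hx =>
    measure_mono_null (Set.Iic_subset_Iio.2 hx) hν
  have hLH : ∫⁻ x, ν (Set.Iic x) * μ (Set.Ioi x) ∂volume < ∞ := by
    have hb : ∀ x : ℝ, ν (Set.Iic x) * μ (Set.Ioi x)
        ≤ (Set.Ici (0:ℝ)).indicator (fun x => μ (Set.Ioi x)) x := by
      intro x
      by_cases hx : (0:ℝ) ≤ x
      · rw [Set.indicator_of_mem (Set.mem_Ici.2 hx) (fun x => μ (Set.Ioi x))]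
        exact mul_le_of_le_one_left zero_le prob_le_one
      · rw [hνneg x (lt_of_not_ge hx), zero_mul]
        exact zero_le
    refine lt_of_le_of_lt (lintegral_mono hb) ?_
    rw [lintegral_indicator measurableSet_Ici, ← lint_A μ 0]
    refine lt_of_le_of_lt (lintegral_mono fun v => ?_) hEμ
    rw [Real.volume_Ico, sub_zero]
  -- integrabilities
  have hf1m : Measurable fun v : ℝ => if p ≤ v then v - p else 0 :=
    Measurable.ite (measurableSet_le measurable_const measurable_id)
      (measurable_id.sub measurable_const) measurable_const
  have hf2m : Measurable fun c : ℝ => if c ≤ q then q - c else 0 :=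
    Measurable.ite (measurableSet_le measurable_id measurable_const)
      (measurable_const.sub measurable_id) measurable_const
  have hi1m : Measurable fun v : ℝ => if p ≤ v then (1:ℝ) else 0 :=
    Measurable.ite (measurableSet_le measurable_const measurable_id)
      measurable_const measurable_const
  have hi2m : Measurable fun c : ℝ => if c ≤ q then (1:ℝ) else 0 :=
    Measurable.ite (measurableSet_le measurable_id measurable_const)
      measurable_const measurable_const
  have hif1 : Integrable (fun v : ℝ => if p ≤ v then v - p else 0) μ := by
    refine hμint.mono hf1m.aestronglyMeasurable (ae_of_all _ fun v => ?_)
    by_cases h : p ≤ v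
    · rw [if_pos h, Real.norm_eq_abs, abs_of_nonneg (by linarith), id]
      calc v - p ≤ v := by linarith
        _ ≤ |v| := le_abs_self v
        _ = ‖v‖ := (Real.norm_eq_abs v).symm
    · rw [if_neg h]; simp
  have hif2 : Integrable (fun c : ℝ => if c ≤ q then q - c else 0) ν := by
    refine Integrable.mono' ((integrable_const q).add hνint.norm)
      hf2m.aestronglyMeasurable (ae_of_all _ fun c => ?_)
    simp only [Pi.add_apply, id, Real.norm_eq_abs]
    by_cases h : c ≤ q
    · rw [if_pos h, abs_of_nonneg (by linarith)]
      have := neg_abs_le c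
      linarith
    · rw [if_neg h, abs_zero]
      have := abs_nonneg c
      linarith
  have hii1 : Integrable (fun v : ℝ => if p ≤ v then (1:ℝ) else 0) μ := by
    refine (integrable_const (1:ℝ)).mono hi1m.aestronglyMeasurable (ae_of_all _ fun v => ?_)
    show ‖if p ≤ v then (1:ℝ) else 0‖ ≤ ‖(1:ℝ)‖
    by_cases h : p ≤ v <;> simp [h]
  have hii2 : Integrable (fun c : ℝ => if c ≤ q then (1:ℝ) else 0) ν := by
    refine (integrable_const (1:ℝ)).mono hi2m.aestronglyMeasurable (ae_of_all _ fun c => ?_)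
    show ‖if c ≤ q then (1:ℝ) else 0‖ ≤ ‖(1:ℝ)‖
    by_cases h : c ≤ q <;> simp [h]
  -- GFT decomposition
  have hsplit : (fun z : ℝ × ℝ => if p ≤ z.1 ∧ z.2 ≤ q then z.1 - z.2 else 0)
      = fun z : ℝ × ℝ =>
        ((if p ≤ z.1 then z.1 - p else 0) * (if z.2 ≤ q then (1:ℝ) else 0)
          + (p - q) * ((if p ≤ z.1 then (1:ℝ) else 0) * (if z.2 ≤ q then (1:ℝ) else 0)))
        + (if p ≤ z.1 then (1:ℝ) else 0) * (if z.2 ≤ q then q - z.2 else 0) := by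
    funext z
    by_cases h1 : p ≤ z.1 <;> by_cases h2 : z.2 ≤ q <;> simp [h1, h2] <;> ring
  have hGFT : ∫ z : ℝ × ℝ, (if p ≤ z.1 ∧ z.2 ≤ q then z.1 - z.2 else 0) ∂(μ.prod ν)
      = (∫ v, (if p ≤ v then v - p else 0) ∂μ) * (∫ c, (if c ≤ q then (1:ℝ) else 0) ∂ν)
        + (p - q) * ((∫ v, (if p ≤ v then (1:ℝ) else 0) ∂μ)
            * (∫ c, (if c ≤ q then (1:ℝ) else 0) ∂ν))
        + (∫ v, (if p ≤ v then (1:ℝ) else 0) ∂μ) * (∫ c, (if c ≤ q then q - c else 0) ∂ν) := by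
    have I1 : Integrable (fun z : ℝ × ℝ =>
        (if p ≤ z.1 then z.1 - p else 0) * (if z.2 ≤ q then (1:ℝ) else 0)) (μ.prod ν) :=
      hif1.mul_prod hii2
    have I2 : Integrable (fun z : ℝ × ℝ =>
        (p - q) * ((if p ≤ z.1 then (1:ℝ) else 0) * (if z.2 ≤ q then (1:ℝ) else 0)))
        (μ.prod ν) := by
      exact (hii1.mul_prod hii2).const_mul _
    have I3 : Integrable (fun z : ℝ × ℝ =>
        (if p ≤ z.1 then (1:ℝ) else 0) * (if z.2 ≤ q then q - z.2 else 0)) (μ.prod ν) :=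
      hii1.mul_prod hif2
    have hadd1 : ∫ z : ℝ × ℝ,
        (((if p ≤ z.1 then z.1 - p else 0) * (if z.2 ≤ q then (1:ℝ) else 0)
          + (p - q) * ((if p ≤ z.1 then (1:ℝ) else 0) * (if z.2 ≤ q then (1:ℝ) else 0)))
        + (if p ≤ z.1 then (1:ℝ) else 0) * (if z.2 ≤ q then q - z.2 else 0)) ∂(μ.prod ν)
        = (∫ z : ℝ × ℝ,
            ((if p ≤ z.1 then z.1 - p else 0) * (if z.2 ≤ q then (1:ℝ) else 0)
          + (p - q) * ((if p ≤ z.1 then (1:ℝ) else 0) * (if z.2 ≤ q then (1:ℝ) else 0)))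
            ∂(μ.prod ν))
          + ∫ z : ℝ × ℝ,
            (if p ≤ z.1 then (1:ℝ) else 0) * (if z.2 ≤ q then q - z.2 else 0) ∂(μ.prod ν) :=
      integral_add (I1.add I2) I3
    have hadd2 : ∫ z : ℝ × ℝ,
        ((if p ≤ z.1 then z.1 - p else 0) * (if z.2 ≤ q then (1:ℝ) else 0)
          + (p - q) * ((if p ≤ z.1 then (1:ℝ) else 0) * (if z.2 ≤ q then (1:ℝ) else 0)))
          ∂(μ.prod ν)
        = (∫ z : ℝ × ℝ,
            (if p ≤ z.1 then z.1 - p else 0) * (if z.2 ≤ q then (1:ℝ) else 0) ∂(μ.prod ν))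
          + ∫ z : ℝ × ℝ,
            (p - q) * ((if p ≤ z.1 then (1:ℝ) else 0) * (if z.2 ≤ q then (1:ℝ) else 0))
            ∂(μ.prod ν) :=
      integral_add I1 I2
    rw [hsplit, hadd1, hadd2, integral_const_mul]
    rw [show (∫ z : ℝ × ℝ, (if p ≤ z.1 then z.1 - p else 0) * (if z.2 ≤ q then (1:ℝ) else 0)
        ∂(μ.prod ν)) = (∫ v, (if p ≤ v then v - p else 0) ∂μ)
          * (∫ c, (if c ≤ q then (1:ℝ) else 0) ∂ν) from
      integral_prod_mul (fun v : ℝ => if p ≤ v then v - p else 0)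
        (fun c : ℝ => if c ≤ q then (1:ℝ) else 0)]
    rw [show (∫ z : ℝ × ℝ, (if p ≤ z.1 then (1:ℝ) else 0) * (if z.2 ≤ q then (1:ℝ) else 0)
        ∂(μ.prod ν)) = (∫ v, (if p ≤ v then (1:ℝ) else 0) ∂μ)
          * (∫ c, (if c ≤ q then (1:ℝ) else 0) ∂ν) from
      integral_prod_mul (fun v : ℝ => if p ≤ v then (1:ℝ) else 0)
        (fun c : ℝ => if c ≤ q then (1:ℝ) else 0)]
    rw [show (∫ z : ℝ × ℝ, (if p ≤ z.1 then (1:ℝ) else 0) * (if z.2 ≤ q then q - z.2 else 0)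
        ∂(μ.prod ν)) = (∫ v, (if p ≤ v then (1:ℝ) else 0) ∂μ)
          * (∫ c, (if c ≤ q then q - c else 0) ∂ν) from
      integral_prod_mul (fun v : ℝ => if p ≤ v then (1:ℝ) else 0)
        (fun c : ℝ => if c ≤ q then q - c else 0)]
  -- values of the four 1-dim integrals
  have hi1val : ∫ v, (if p ≤ v then (1:ℝ) else 0) ∂μ = (μ (Set.Ici p)).toReal := by
    rw [show (fun v : ℝ => if p ≤ v then (1:ℝ) else 0) = (Set.Ici p).indicator 1 by
      funext v; by_cases h : p ≤ v <;> simp [Set.indicator_apply, h]]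
    exact integral_indicator_one measurableSet_Ici
  have hi2val : ∫ c, (if c ≤ q then (1:ℝ) else 0) ∂ν = (ν (Set.Iic q)).toReal := by
    rw [show (fun c : ℝ => if c ≤ q then (1:ℝ) else 0) = (Set.Iic q).indicator 1 by
      funext c; by_cases h : c ≤ q <;> simp [Set.indicator_apply, h]]
    exact integral_indicator_one measurableSet_Iic
  have hAval : ∫ v, (if p ≤ v then v - p else 0) ∂μ
      = (∫⁻ x in Set.Ici p, μ (Set.Ioi x) ∂volume).toReal := by
    rw [integral_eq_lintegral_of_nonneg_ae (ae_of_all _ fun v => by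
        simp only [Pi.zero_apply]
        by_cases h : p ≤ v
        · rw [if_pos h]; linarith
        · rw [if_neg h]) hf1m.aestronglyMeasurable, ← lint_A]
    congr 1
    apply lintegral_congr; intro v
    rw [Real.volume_Ico]
    by_cases h : p ≤ v
    · rw [if_pos h]
    · rw [if_neg h, ENNReal.ofReal_zero, eq_comm]
      exact ENNReal.ofReal_of_nonpos (by linarith)
  have hBval : ∫ c, (if c ≤ q then q - c else 0) ∂ν
      = (∫⁻ x in Set.Iio q, ν (Set.Iic x) ∂volume).toReal := by
    rw [integral_eq_lintegral_of_nonneg_ae (ae_of_all _ fun c => by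
        simp only [Pi.zero_apply]
        by_cases h : c ≤ q
        · rw [if_pos h]; linarith
        · rw [if_neg h]) hf2m.aestronglyMeasurable, ← lint_B]
    congr 1
    apply lintegral_congr; intro c
    rw [Real.volume_Ico]
    by_cases h : c ≤ q
    · rw [if_pos h]
    · rw [if_neg h, ENNReal.ofReal_zero, eq_comm]
      exact ENNReal.ofReal_of_nonpos (by linarith)
  have hFBval : ∫ z : ℝ × ℝ, (if z.2 ≤ z.1 then z.1 - z.2 else 0) ∂(μ.prod ν)
      = (∫⁻ x, ν (Set.Iic x) * μ (Set.Ioi x) ∂volume).toReal := by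
    rw [integral_eq_lintegral_of_nonneg_ae (f := fun z : ℝ × ℝ => if z.2 ≤ z.1 then z.1 - z.2 else 0) (ae_of_all _ fun z => by
        simp only [Pi.zero_apply]
        by_cases h : z.2 ≤ z.1
        · rw [if_pos h]; linarith
        · rw [if_neg h])
      ((Measurable.ite (measurableSet_le measurable_snd measurable_fst)
        (measurable_fst.sub measurable_snd) measurable_const).aestronglyMeasurable),
      ← key_fubini']
    congr 1
    apply lintegral_congr; intro z
    rw [Real.volume_Ico]
    by_cases h : z.2 ≤ z.1
    · rw [if_pos h]
    · rw [if_neg h, ENNReal.ofReal_zero, eq_comm]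
      exact ENNReal.ofReal_of_nonpos (by push_neg at h; linarith)
  -- set integral identity for the density function
  have hsetint : ∀ s : Set ℝ, MeasurableSet s →
      ∫ x in s, G x * (1 - F x) ∂volume
        = (∫⁻ x in s, ν (Set.Iic x) * μ (Set.Ioi x) ∂volume).toReal := by
    intro s hs
    rw [integral_eq_lintegral_of_nonneg_ae
      (ae_of_all _ fun x => by
        simp only [Pi.zero_apply]; rw [hFG]; exact ENNReal.toReal_nonneg)
      (by rw [show (fun x => G x * (1 - F x))
            = fun x => (ν (Set.Iic x) * μ (Set.Ioi x)).toReal from funext hFG]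
          exact hHm.ennreal_toReal.aestronglyMeasurable)]
    congr 1
    apply lintegral_congr; intro x
    rw [hFG, ENNReal.ofReal_toReal (hne x)]
  -- splitting of the full lintegral
  have hsplitH : ∫⁻ x, ν (Set.Iic x) * μ (Set.Ioi x) ∂volume
      = (∫⁻ x in Set.Iic q, ν (Set.Iic x) * μ (Set.Ioi x) ∂volume)
        + (∫⁻ x in Set.Ioc q p, ν (Set.Iic x) * μ (Set.Ioi x) ∂volume)
        + (∫⁻ x in Set.Ioi p, ν (Set.Iic x) * μ (Set.Ioi x) ∂volume) := by
    rw [← lintegral_add_compl (fun x => ν (Set.Iic x) * μ (Set.Ioi x))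
        (measurableSet_Iic (a := p)), Set.compl_Iic, ← Set.Iic_union_Ioc_eq_Iic hpq,
      lintegral_union measurableSet_Ioc (Set.Iic_disjoint_Ioc le_rfl)]
  -- finiteness of the pieces
  have hLq : (∫⁻ x in Set.Iic q, ν (Set.Iic x) * μ (Set.Ioi x) ∂volume) ≠ ∞ :=
    (lt_of_le_of_lt (setLIntegral_le_lintegral _ _) hLH).ne
  have hLm : (∫⁻ x in Set.Ioc q p, ν (Set.Iic x) * μ (Set.Ioi x) ∂volume) ≠ ∞ :=
    (lt_of_le_of_lt (setLIntegral_le_lintegral _ _) hLH).ne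
  have hLp : (∫⁻ x in Set.Ioi p, ν (Set.Iic x) * μ (Set.Ioi x) ∂volume) ≠ ∞ :=
    (lt_of_le_of_lt (setLIntegral_le_lintegral _ _) hLH).ne
  -- key inequalities
  have hA_ge : (∫⁻ x in Set.Ici p, μ (Set.Ioi x) ∂volume).toReal
      ≥ (∫⁻ x in Set.Ioi p, ν (Set.Iic x) * μ (Set.Ioi x) ∂volume).toReal := by
    refine ENNReal.toReal_mono hLA.ne ?_
    calc ∫⁻ x in Set.Ioi p, ν (Set.Iic x) * μ (Set.Ioi x) ∂volume
        ≤ ∫⁻ x in Set.Ioi p, μ (Set.Ioi x) ∂volume :=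
          lintegral_mono fun x => mul_le_of_le_one_left zero_le prob_le_one
      _ ≤ ∫⁻ x in Set.Ici p, μ (Set.Ioi x) ∂volume :=
          lintegral_mono_set Set.Ioi_subset_Ici_self
  have hB_ge : (∫⁻ x in Set.Iio q, ν (Set.Iic x) ∂volume).toReal
      ≥ (∫⁻ x in Set.Iic q, ν (Set.Iic x) * μ (Set.Ioi x) ∂volume).toReal := by
    refine ENNReal.toReal_mono hLB.ne ?_
    calc ∫⁻ x in Set.Iic q, ν (Set.Iic x) * μ (Set.Ioi x) ∂volume
        = ∫⁻ x in Set.Iio q, ν (Set.Iic x) * μ (Set.Ioi x) ∂volume := by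
          rw [Measure.restrict_congr_set Iio_ae_eq_Iic]
      _ ≤ ∫⁻ x in Set.Iio q, ν (Set.Iic x) ∂volume :=
          lintegral_mono fun x => mul_le_of_le_one_right zero_le prob_le_one
  have hP_ge : (μ (Set.Ici p)).toReal ≥ (μ (Set.Ioi p)).toReal :=
    ENNReal.toReal_mono (measure_ne_top μ _) (measure_mono Set.Ioi_subset_Ici_self)
  -- assemble
  rw [hGFT, hi1val, hi2val, hAval, hBval, hFBval, hsplitH,
    intervalIntegral.integral_of_le hpq, hsetint _ measurableSet_Ioc, hFp, hG q,
    ENNReal.toReal_add (ENNReal.add_ne_top.2 ⟨hLq, hLm⟩) hLp, ENNReal.toReal_add hLq hLm]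
  set a := (∫⁻ x in Set.Ici p, μ (Set.Ioi x) ∂volume).toReal
  set b := (∫⁻ x in Set.Iio q, ν (Set.Iic x) ∂volume).toReal
  set lq := (∫⁻ x in Set.Iic q, ν (Set.Iic x) * μ (Set.Ioi x) ∂volume).toReal
  set lm := (∫⁻ x in Set.Ioc q p, ν (Set.Iic x) * μ (Set.Ioi x) ∂volume).toReal
  set lp := (∫⁻ x in Set.Ioi p, ν (Set.Iic x) * μ (Set.Ioi x) ∂volume).toReal
  set P := (μ (Set.Ici p)).toReal
  set fp := (μ (Set.Ioi p)).toReal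
  set Gq := (ν (Set.Iic q)).toReal
  have hGq0 : 0 ≤ Gq := ENNReal.toReal_nonneg
  have hfp0 : 0 ≤ fp := ENNReal.toReal_nonneg
  have hlq0 : 0 ≤ lq := ENNReal.toReal_nonneg
  have hlp0 : 0 ≤ lp := ENNReal.toReal_nonneg
  have hm1 : min Gq fp ≤ Gq := min_le_left _ _
  have hm2 : min Gq fp ≤ fp := min_le_right _ _
  have hm0 : 0 ≤ min Gq fp := le_min hGq0 hfp0
  have e1 : a * Gq ≥ min Gq fp * lp := by
    calc a * Gq ≥ lp * Gq := mul_le_mul_of_nonneg_right hA_ge hGq0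
      _ ≥ lp * min Gq fp := mul_le_mul_of_nonneg_left hm1 hlp0
      _ = min Gq fp * lp := mul_comm _ _
  have e2 : (p - q) * (P * Gq) ≥ (p - q) * (fp * Gq) :=
    mul_le_mul_of_nonneg_left (mul_le_mul_of_nonneg_right hP_ge hGq0) (by linarith)
  have e3 : P * b ≥ min Gq fp * lq := by
    have hb0 : 0 ≤ b := ENNReal.toReal_nonneg
    calc P * b ≥ fp * b := mul_le_mul_of_nonneg_right hP_ge hb0
      _ ≥ fp * lq := mul_le_mul_of_nonneg_left hB_ge hfp0
      _ ≥ min Gq fp * lq := mul_le_mul_of_nonneg_right hm2 hlq0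
  nlinarith [e1, e2, e3]
end

section
/- Let v ∼ F and c ∼ G be independent nonnegative random variables with finite expectations, and suppose a single price p = q is posted to both agents. Then GFT(p) = E[(v − c)·1{v ≥ p}·1{c ≤ p}] ≥ min(G(p), 1 − F(p))·E[(v − c)·1{v ≥ c}]. -/
open MeasureTheory Set Filter

theorem stmt5 (μ ν : Measure ℝ) [IsProbabilityMeasure μ] [IsProbabilityMeasure ν]
    (hμ : μ (Set.Iio 0) = 0) (hν : ν (Set.Iio 0) = 0)
    (hμint : Integrable id μ) (hνint : Integrable id ν)
    (F G : ℝ → ℝ) (hF : ∀ v, F v = (μ (Set.Iic v)).toReal)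
    (hG : ∀ c, G c = (ν (Set.Iic c)).toReal)
    (p : ℝ) :
    (∫ z : ℝ × ℝ, (if p ≤ z.1 ∧ z.2 ≤ p then z.1 - z.2 else 0) ∂(μ.prod ν))
      ≥ min (G p) (1 - F p) *
        ∫ z : ℝ × ℝ, (if z.2 ≤ z.1 then z.1 - z.2 else 0) ∂(μ.prod ν) := by
  set g : ℝ → ℝ := fun v => if p ≤ v then v - p else 0 with hg_def
  set h : ℝ → ℝ := fun c => if c ≤ p then p - c else 0 with hh_def
  have hg : Integrable g μ := by
    have h1 : Integrable (fun v : ℝ => v - p) μ := hμint.sub (integrable_const p)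
    refine h1.pos_part.congr (Filter.Eventually.of_forall fun v => ?_)
    simp only [hg_def]
    rcases le_or_gt p v with hv | hv
    · rw [if_pos hv, max_eq_left (by linarith)]
    · rw [if_neg (not_le.2 hv), max_eq_right (by linarith)]
  have hh : Integrable h ν := by
    have h1 : Integrable (fun c : ℝ => p - c) ν := (integrable_const p).sub hνint
    refine h1.pos_part.congr (Filter.Eventually.of_forall fun c => ?_)
    simp only [hh_def]
    rcases le_or_gt c p with hc | hc
    · rw [if_pos hc, max_eq_left (by linarith)]
    · rw [if_neg (not_le.2 hc), max_eq_right (by linarith)]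
  have hgpt : ∀ v : ℝ, 0 ≤ g v := by
    intro v; simp only [hg_def]
    split <;> [linarith; exact le_rfl]
  have hhpt : ∀ c : ℝ, 0 ≤ h c := by
    intro c; simp only [hh_def]
    split <;> [linarith; exact le_rfl]
  have hgnn : 0 ≤ ∫ v, g v ∂μ := integral_nonneg hgpt
  have hhnn : 0 ≤ ∫ c, h c ∂ν := integral_nonneg hhpt
  set m : ℝ := min (G p) (1 - F p) with hm_def
  have hm0 : 0 ≤ m := by
    apply le_min
    · rw [hG]; exact ENNReal.toReal_nonneg
    · rw [hF]
      have : (μ (Set.Iic p)).toReal ≤ 1 := by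
        have := prob_le_one (μ := μ) (s := Set.Iic p)
        simpa using ENNReal.toReal_mono (by simp) this
      linarith
  have hm1 : m ≤ (ν (Set.Iic p)).toReal := by
    rw [← hG]; exact min_le_left _ _
  have hm2 : m ≤ (μ (Set.Ici p)).toReal := by
    have h1 : m ≤ 1 - (μ (Set.Iic p)).toReal := by rw [← hF]; exact min_le_right _ _
    have h2 : (1 : ℝ) ≤ (μ (Set.Iic p)).toReal + (μ (Set.Ici p)).toReal := by
      have hu : μ Set.univ ≤ μ (Set.Iic p) + μ (Set.Ici p) := by
        rw [← Set.Iic_union_Ici (a := p)]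
        exact measure_union_le _ _
      have := ENNReal.toReal_mono
        (by simp [ENNReal.add_ne_top, measure_ne_top]) hu
      rw [ENNReal.toReal_add (measure_ne_top _ _) (measure_ne_top _ _)] at this
      simpa using this
    linarith
  -- integrability on the product
  have hg1 : Integrable (fun z : ℝ × ℝ => g z.1) (μ.prod ν) := by
    have := hg.mul_prod (integrable_const (1 : ℝ)) (ν := ν)
    simpa using this
  have hh1 : Integrable (fun z : ℝ × ℝ => h z.2) (μ.prod ν) := by
    have := (integrable_const (1 : ℝ)).mul_prod hh (μ := μ)
    simpa using this
  have e1 : ∫ z : ℝ × ℝ, g z.1 ∂(μ.prod ν) = ∫ v, g v ∂μ := by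
    have := integral_prod_mul (μ := μ) (ν := ν) g (fun _ : ℝ => (1 : ℝ))
    simpa using this
  have e2 : ∫ z : ℝ × ℝ, h z.2 ∂(μ.prod ν) = ∫ c, h c ∂ν := by
    have := integral_prod_mul (μ := μ) (ν := ν) (fun _ : ℝ => (1 : ℝ)) h
    simpa using this
  -- indicator functions
  set I1 : ℝ → ℝ := (Set.Ici p).indicator (fun _ => (1:ℝ)) with hI1_def
  set I2 : ℝ → ℝ := (Set.Iic p).indicator (fun _ => (1:ℝ)) with hI2_def
  have hIν : Integrable I2 ν := (integrable_const (1:ℝ)).indicator measurableSet_Iic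
  have hIμ : Integrable I1 μ := (integrable_const (1:ℝ)).indicator measurableSet_Ici
  -- decompose the left-hand side
  have hLHS : (∫ z : ℝ × ℝ, (if p ≤ z.1 ∧ z.2 ≤ p then z.1 - z.2 else 0) ∂(μ.prod ν))
      = (∫ v, g v ∂μ) * (ν (Set.Iic p)).toReal
        + (μ (Set.Ici p)).toReal * (∫ c, h c ∂ν) := by
    have hfun : (fun z : ℝ × ℝ => (if p ≤ z.1 ∧ z.2 ≤ p then z.1 - z.2 else 0))
        = fun z : ℝ × ℝ => g z.1 * I2 z.2 + I1 z.1 * h z.2 := by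
      funext z
      simp only [hg_def, hh_def, hI1_def, hI2_def]
      rcases le_or_gt p z.1 with h1 | h1 <;> rcases le_or_gt z.2 p with h2 | h2
      · rw [if_pos ⟨h1, h2⟩, if_pos h1, if_pos h2,
          Set.indicator_of_mem (Set.mem_Iic.2 h2),
          Set.indicator_of_mem (Set.mem_Ici.2 h1)]
        ring
      · rw [if_neg (fun hc => absurd hc.2 (not_le.2 h2)), if_pos h1,
          if_neg (not_le.2 h2),
          Set.indicator_of_notMem (by simp only [Set.mem_Iic, not_le]; exact h2),
          Set.indicator_of_mem (Set.mem_Ici.2 h1)]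
        ring
      · rw [if_neg (fun hc => absurd hc.1 (not_le.2 h1)), if_neg (not_le.2 h1),
          if_pos h2,
          Set.indicator_of_mem (Set.mem_Iic.2 h2),
          Set.indicator_of_notMem (by simp only [Set.mem_Ici, not_le]; exact h1)]
        ring
      · rw [if_neg (fun hc => absurd hc.1 (not_le.2 h1)), if_neg (not_le.2 h1),
          if_neg (not_le.2 h2),
          Set.indicator_of_notMem (by simp only [Set.mem_Iic, not_le]; exact h2),
          Set.indicator_of_notMem (by simp only [Set.mem_Ici, not_le]; exact h1)]
        ring
    have P1 : ∫ z : ℝ × ℝ, g z.1 * I2 z.2 ∂(μ.prod ν)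
        = (∫ v, g v ∂μ) * ∫ c, I2 c ∂ν := integral_prod_mul g I2
    have P2 : ∫ z : ℝ × ℝ, I1 z.1 * h z.2 ∂(μ.prod ν)
        = (∫ v, I1 v ∂μ) * ∫ c, h c ∂ν := integral_prod_mul I1 h
    have Q1 : ∫ c, I2 c ∂ν = (ν (Set.Iic p)).toReal := by
      rw [hI2_def, integral_indicator_const _ measurableSet_Iic]; simp; rfl
    have Q2 : ∫ v, I1 v ∂μ = (μ (Set.Ici p)).toReal := by
      rw [hI1_def, integral_indicator_const _ measurableSet_Ici]; simp; rfl
    rw [hfun, integral_add (hg.mul_prod hIν) (hIμ.mul_prod hh), P1, P2, Q1, Q2]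
  rw [ge_iff_le, hLHS]
  calc m * ∫ z : ℝ × ℝ, (if z.2 ≤ z.1 then z.1 - z.2 else 0) ∂(μ.prod ν)
      ≤ m * ∫ z : ℝ × ℝ, (g z.1 + h z.2) ∂(μ.prod ν) := by
        apply mul_le_mul_of_nonneg_left _ hm0
        apply integral_mono_of_nonneg
        · filter_upwards with z
          by_cases hz : z.2 ≤ z.1 <;> simp [hz] <;> linarith
        · exact hg1.add hh1
        · filter_upwards with z
          have h1 := hgpt z.1
          have h2 := hhpt z.2
          by_cases hz : z.2 ≤ z.1
          · simp only [if_pos hz, hg_def, hh_def]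
            by_cases hv : p ≤ z.1 <;> by_cases hc : z.2 ≤ p <;>
              simp only [if_pos, if_neg, hv, hc, if_true, if_false] <;> linarith
          · simp only [if_neg hz]
            positivity
    _ = m * ((∫ v, g v ∂μ) + ∫ c, h c ∂ν) := by
        rw [integral_add hg1 hh1, e1, e2]
    _ ≤ (∫ v, g v ∂μ) * (ν (Set.Iic p)).toReal
        + (μ (Set.Ici p)).toReal * (∫ c, h c ∂ν) := by
        have b1 : m * (∫ v, g v ∂μ) ≤ (∫ v, g v ∂μ) * (ν (Set.Iic p)).toReal := by
          rw [mul_comm (∫ v, g v ∂μ) ((ν (Set.Iic p)).toReal)]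
          exact mul_le_mul_of_nonneg_right hm1 hgnn
        have b2 : m * (∫ c, h c ∂ν) ≤ (μ (Set.Ici p)).toReal * (∫ c, h c ∂ν) :=
          mul_le_mul_of_nonneg_right hm2 hhnn
        nlinarith
end

section
/- Let v ∼ F and c ∼ G be independent nonnegative random variables with finite expectations, and suppose p satisfies min(G(p), 1 − F(p)) ≥ 1/2. Then the single-price posted mechanism at price p achieves gains-from-trade at least half of the first-best: E[(v − c)·1{v ≥ p ≥ c}] ≥ (1/2)·E[(v − c)·1{v ≥ c}]. -/
open MeasureTheory Set Filter

theorem stmt6 (μ ν : Measure ℝ) [IsProbabilityMeasure μ] [IsProbabilityMeasure ν]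
    (hμ : μ (Set.Iio 0) = 0) (hν : ν (Set.Iio 0) = 0)
    (hμint : Integrable id μ) (hνint : Integrable id ν)
    (F G : ℝ → ℝ) (hF : ∀ v, F v = (μ (Set.Iic v)).toReal)
    (hG : ∀ c, G c = (ν (Set.Iic c)).toReal)
    (p : ℝ) (hmed : (1:ℝ)/2 ≤ min (G p) (1 - F p)) :
    (∫ z : ℝ × ℝ, (if p ≤ z.1 ∧ z.2 ≤ p then z.1 - z.2 else 0) ∂(μ.prod ν))
      ≥ (1/2) * ∫ z : ℝ × ℝ, (if z.2 ≤ z.1 then z.1 - z.2 else 0) ∂(μ.prod ν) := by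
  set f : ℝ → ℝ := fun v => max (v - p) 0 with hfdef
  set k : ℝ → ℝ := fun c => max (p - c) 0 with hkdef
  set g : ℝ → ℝ := (Set.Iic p).indicator 1 with hgdef
  set h : ℝ → ℝ := (Set.Ici p).indicator 1 with hhdef
  have hf : Integrable f μ := (hμint.sub (integrable_const p)).pos_part
  have hk : Integrable k ν := ((integrable_const p).sub hνint).pos_part
  have hg : Integrable g ν := (integrable_const (1:ℝ)).indicator measurableSet_Iic
  have hh : Integrable h μ := (integrable_const (1:ℝ)).indicator measurableSet_Ici
  -- values of the simple integrals
  have hA : (0:ℝ) ≤ ∫ v, f v ∂μ := integral_nonneg fun v => le_max_right _ _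
  have hB : (0:ℝ) ≤ ∫ c, k c ∂ν := integral_nonneg fun c => le_max_right _ _
  have hga : ∫ c, g c ∂ν = (ν (Set.Iic p)).toReal := integral_indicator_one measurableSet_Iic
  have hhb : ∫ v, h v ∂μ = (μ (Set.Ici p)).toReal := integral_indicator_one measurableSet_Ici
  have ha2 : (1:ℝ)/2 ≤ ∫ c, g c ∂ν := by
    rw [hga, ← hG p]; exact hmed.trans (min_le_left _ _)
  have hb2 : (1:ℝ)/2 ≤ ∫ v, h v ∂μ := by
    rw [hhb]
    have h1 : μ (Set.Iio p) ≤ ENNReal.ofReal (1/2) := by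
      refine le_trans (measure_mono Set.Iio_subset_Iic_self) ?_
      have hFp : F p ≤ 1/2 := by
        have := hmed.trans (min_le_right _ _); linarith
      rw [hF] at hFp
      rw [← ENNReal.ofReal_toReal (measure_ne_top μ (Set.Iic p))]
      exact ENNReal.ofReal_le_ofReal hFp
    have hcompl : μ (Set.Ici p) = 1 - μ (Set.Iio p) := by
      rw [← Set.compl_Iio, measure_compl measurableSet_Iio (measure_ne_top _ _),
        measure_univ]
    rw [hcompl]
    have h3 : ENNReal.ofReal (1/2) ≤ 1 - μ (Set.Iio p) := by
      have : ENNReal.ofReal (1/2) + μ (Set.Iio p) ≤ 1 := by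
        calc ENNReal.ofReal (1/2) + μ (Set.Iio p) ≤ ENNReal.ofReal (1/2) + ENNReal.ofReal (1/2) := by
              exact add_le_add_right h1 _
          _ = 1 := by rw [← ENNReal.ofReal_add (by norm_num) (by norm_num)]; norm_num
      exact ENNReal.le_sub_of_add_le_right (measure_ne_top μ _) this
    calc (1:ℝ)/2 = (ENNReal.ofReal (1/2)).toReal := by simp
      _ ≤ (1 - μ (Set.Iio p)).toReal := ENNReal.toReal_mono (by simp [tsub_le_iff_right]) h3
  -- LHS identity
  have hLHS : (∫ z : ℝ × ℝ, (if p ≤ z.1 ∧ z.2 ≤ p then z.1 - z.2 else 0) ∂(μ.prod ν))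
      = (∫ v, f v ∂μ) * (∫ c, g c ∂ν) + (∫ v, h v ∂μ) * (∫ c, k c ∂ν) := by
    have heq : ∀ z : ℝ × ℝ, (if p ≤ z.1 ∧ z.2 ≤ p then z.1 - z.2 else 0)
        = f z.1 * g z.2 + h z.1 * k z.2 := by
      intro z
      rcases lt_or_ge z.1 p with h1 | h1
      · have hcond : ¬(p ≤ z.1 ∧ z.2 ≤ p) := fun hc => h1.not_ge hc.1
        rw [if_neg hcond]
        simp only [hfdef, hgdef, hhdef, hkdef,
          Set.indicator_of_notMem (by simpa using h1.not_ge : z.1 ∉ Set.Ici p)]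
        rw [show (z.1 - p) ⊔ 0 = 0 from max_eq_right (by linarith)]; ring
      · rcases le_or_gt z.2 p with h2 | h2
        · rw [if_pos (⟨h1, h2⟩ : p ≤ z.1 ∧ z.2 ≤ p)]
          simp only [hfdef, hgdef, hhdef, hkdef, Pi.one_apply,
            Set.indicator_of_mem (Set.mem_Iic.2 h2), Set.indicator_of_mem (Set.mem_Ici.2 h1)]
          rw [show (z.1 - p) ⊔ 0 = z.1 - p from max_eq_left (by linarith),
            show (p - z.2) ⊔ 0 = p - z.2 from max_eq_left (by linarith)]
          ring
        · have hcond : ¬(p ≤ z.1 ∧ z.2 ≤ p) := fun hc => h2.not_ge hc.2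
          rw [if_neg hcond]
          simp only [hfdef, hgdef, hhdef, hkdef,
            Set.indicator_of_notMem (by simpa using h2.not_ge : z.2 ∉ Set.Iic p)]
          rw [show (p - z.2) ⊔ 0 = 0 from max_eq_right (by linarith)]; ring
    simp_rw [heq]
    rw [integral_add (hf.mul_prod hg) (hh.mul_prod hk), integral_prod_mul, integral_prod_mul]
  -- RHS bound
  have hRHS : (∫ z : ℝ × ℝ, (if z.2 ≤ z.1 then z.1 - z.2 else 0) ∂(μ.prod ν))
      ≤ (∫ v, f v ∂μ) + (∫ c, k c ∂ν) := by
    have hbig : Integrable (fun z : ℝ × ℝ => f z.1 * 1 + 1 * k z.2) (μ.prod ν) :=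
      (hf.mul_prod (integrable_const 1)).add ((integrable_const 1).mul_prod hk)
    have hmono : ∀ z : ℝ × ℝ, (if z.2 ≤ z.1 then z.1 - z.2 else 0) ≤ f z.1 * 1 + 1 * k z.2 := by
      intro z
      simp only [mul_one, one_mul, hfdef, hkdef]
      split_ifs with h1
      · calc z.1 - z.2 = (z.1 - p) + (p - z.2) := by ring
          _ ≤ max (z.1 - p) 0 + max (p - z.2) 0 := add_le_add (le_max_left _ _) (le_max_left _ _)
      · positivity
    calc (∫ z : ℝ × ℝ, (if z.2 ≤ z.1 then z.1 - z.2 else 0) ∂(μ.prod ν))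
        ≤ ∫ z : ℝ × ℝ, f z.1 * 1 + 1 * k z.2 ∂(μ.prod ν) := by
          refine integral_mono_of_nonneg (Filter.Eventually.of_forall ?_) hbig
            (Filter.Eventually.of_forall hmono)
          intro z; dsimp only; split_ifs with h1 <;> simp [sub_nonneg, h1]
      _ = (∫ v, f v ∂μ) + (∫ c, k c ∂ν) := by
          rw [integral_add (hf.mul_prod (integrable_const 1)) ((integrable_const 1).mul_prod hk),
            integral_prod_mul f (fun _ => (1:ℝ)), integral_prod_mul (fun _ => (1:ℝ)) k]
          simp
  rw [ge_iff_le, hLHS]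
  set A := ∫ v, f v ∂μ
  set B := ∫ c, k c ∂ν
  set a := ∫ c, g c ∂ν
  set b := ∫ v, h v ∂μ
  nlinarith [mul_le_mul_of_nonneg_left ha2 hA, mul_le_mul_of_nonneg_left hb2 hB]
end

section
/- Let F = G be a common continuous CDF of independent nonnegative random variables v and c with finite expectation. If p, q are drawn independently from F and the broker posts prices (max(p,q), min(p,q)), then the expected gains-from-trade of this mechanism is at least (1/12)·E[(v − c)·1{v ≥ c}]. -/
open MeasureTheory Set Filter

lemma intIf {α : Type*} [MeasurableSpace α] (μ : Measure α) [IsFiniteMeasure μ]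
    (p : α → Prop) [DecidablePred p] (hp : MeasurableSet {x | p x}) (c : ℝ) :
    ∫ x, (if p x then c else 0) ∂μ = (μ {x | p x}).toReal * c := by
  have h : ∀ x, (if p x then c else 0) = Set.indicator {x | p x} (fun _ => c) x := by
    intro x; by_cases h : p x <;> simp [h]
  simp_rw [h]
  rw [integral_indicator_const c hp]
  simp [mul_comm, Measure.real]

lemma intgBdd {α : Type*} [MeasurableSpace α] (μ : Measure α) [IsFiniteMeasure μ]
    {f : α → ℝ} (hf : Measurable f) (C : ℝ) (hC : ∀ x, |f x| ≤ C) : Integrable f μ :=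
  Integrable.mono' (integrable_const C) hf.aestronglyMeasurable
    (Eventually.of_forall (by simpa [Real.norm_eq_abs] using hC))

section Aux
variable {μ : Measure ℝ} [IsProbabilityMeasure μ] {F : ℝ → ℝ}

lemma auxMono (hF : ∀ v, F v = (μ (Set.Iic v)).toReal) : Monotone F := by
  intro a b hab
  rw [hF a, hF b]
  exact ENNReal.toReal_le_toReal (measure_ne_top μ _) (measure_ne_top μ _) |>.mpr
    (measure_mono (Iic_subset_Iic.2 hab))

lemma aux01 (hF : ∀ v, F v = (μ (Set.Iic v)).toReal) : ∀ v, 0 ≤ F v ∧ F v ≤ 1 := by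
  intro v
  rw [hF v]
  constructor
  · exact ENNReal.toReal_nonneg
  · exact ENNReal.toReal_le_of_le_ofReal zero_le_one (by simpa using prob_le_one)

lemma auxAtom (hF : ∀ v, F v = (μ (Set.Iic v)).toReal) (hcont : Continuous F) :
    ∀ a : ℝ, μ {a} = 0 := by
  intro a
  have h1 : ∀ b : ℝ, b < a → (μ {a}).toReal ≤ F a - F b := by
    intro b hb
    have hsub : {a} ⊆ Ioc b a := by intro x hx; simp at hx; simp [hx, hb]
    have : (μ {a}).toReal ≤ (μ (Ioc b a)).toReal :=
      (ENNReal.toReal_le_toReal (measure_ne_top μ _) (measure_ne_top μ _)).mpr (measure_mono hsub)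
    rw [hF a, hF b]
    have h3 : μ (Iic a) = μ (Iic b) + μ (Ioc b a) := by
      rw [← measure_union (by simp [Set.disjoint_left]; intro x hx h; linarith) measurableSet_Ioc]
      congr 1
      ext x; simp; constructor
      · intro h; rcases le_or_gt x b with h'|h'; exact Or.inl h'; exact Or.inr ⟨h', h⟩
      · rintro (h|⟨_,h⟩); exact le_trans h hb.le; exact h
    rw [h3, ENNReal.toReal_add (measure_ne_top μ _) (measure_ne_top μ _)]
    linarith
  have hlim : Tendsto (fun n : ℕ => F a - F (a - 1/(n+1))) atTop (nhds 0) := by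
    have h2 : Tendsto (fun n : ℕ => a - 1/(n+1)) atTop (nhds a) := by
      simpa using (tendsto_const_nhds (x := a)).sub tendsto_one_div_add_atTop_nhds_zero_nat
    have h3 := ((hcont.tendsto a).comp h2)
    have h4 := (tendsto_const_nhds (x := F a) (f := atTop (α := ℕ))).sub h3
    simpa using h4
  have hle : (μ {a}).toReal ≤ 0 := by
    refine ge_of_tendsto hlim (Eventually.of_forall fun n => h1 _ ?_)
    have : (0:ℝ) < 1/(n+1) := by positivity
    linarith
  have : (μ {a}).toReal = 0 := le_antisymm hle ENNReal.toReal_nonneg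
  simpa [ENNReal.toReal_eq_zero_iff, measure_ne_top μ _] using this

lemma auxIoc (hF : ∀ v, F v = (μ (Set.Iic v)).toReal) {a b : ℝ} (hab : a ≤ b) :
    (μ (Ioc a b)).toReal = F b - F a := by
  rw [hF a, hF b, ← Set.Iic_sdiff_Iic,
    measure_diff (Iic_subset_Iic.2 hab) measurableSet_Iic.nullMeasurableSet (measure_ne_top μ _),
    ENNReal.toReal_sub_of_le (measure_mono (Iic_subset_Iic.2 hab)) (measure_ne_top μ _)]

lemma auxIcc (hF : ∀ v, F v = (μ (Set.Iic v)).toReal) (hcont : Continuous F)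
    {a b : ℝ} (hab : a ≤ b) : (μ (Icc a b)).toReal = F b - F a := by
  rw [← measure_congr (Ioc_ae_eq_Icc' (auxAtom hF hcont a))]
  exact auxIoc hF hab

lemma auxIoi (hF : ∀ v, F v = (μ (Set.Iic v)).toReal) (t : ℝ) :
    (μ (Ioi t)).toReal = 1 - F t := by
  rw [hF t, ← Set.compl_Iic, measure_compl measurableSet_Iic (measure_ne_top μ _),
    measure_univ, ENNReal.toReal_sub_of_le prob_le_one ENNReal.one_ne_top]
  simp

lemma auxDiag (hatom : ∀ a : ℝ, μ {a} = 0) :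
    ∫ z : ℝ × ℝ, (if z.1 = z.2 then (1:ℝ) else 0) ∂(μ.prod μ) = 0 := by
  have hms : MeasurableSet {z : ℝ × ℝ | z.1 = z.2} :=
    measurableSet_eq_fun measurable_fst measurable_snd
  have hI : Integrable (Function.uncurry fun a b => if a = b then (1:ℝ) else 0) (μ.prod μ) := by
    refine intgBdd _ ?_ 1 ?_
    · exact Measurable.ite hms measurable_const measurable_const
    · intro z; simp only [Function.uncurry]; split_ifs <;> norm_num
  have h0 := integral_integral hI
  rw [← h0]
  have h1 : ∀ a : ℝ, (∫ b, (if a = b then (1:ℝ) else 0) ∂μ) = 0 := by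
    intro a
    have h2 : ∀ b : ℝ, (if a = b then (1:ℝ) else 0) = (if b ∈ ({a} : Set ℝ) then (1:ℝ) else 0) := by
      intro b; simp [eq_comm]
    simp_rw [h2]
    rw [intIf μ (fun b => b ∈ ({a} : Set ℝ)) (by simpa using measurableSet_singleton a) 1]
    simp [hatom a]
  simp_rw [h1, integral_zero]

lemma auxJ1 (hF : ∀ v, F v = (μ (Set.Iic v)).toReal) (hcont : Continuous F) (t : ℝ) :
    ∫ v, (if t < v then F v - F t else 0) ∂μ = (1 - F t)^2/2 := by
  have hatom := auxAtom hF hcont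
  have step1 : ∀ v : ℝ, (if t < v then F v - F t else 0)
      = ∫ u, (if t < u ∧ u ≤ v then (1:ℝ) else 0) ∂μ := by
    intro v
    rw [intIf μ (fun u => t < u ∧ u ≤ v)
      ((measurableSet_lt measurable_const measurable_id).inter
        (measurableSet_le measurable_id measurable_const)) 1, mul_one]
    have hset : {u : ℝ | t < u ∧ u ≤ v} = Ioc t v := rfl
    rw [hset]
    by_cases h : t < v
    · rw [if_pos h, auxIoc hF h.le]
    · rw [if_neg h, Set.Ioc_eq_empty h]
      simp [hF]
  simp_rw [step1]
  have hmeas1 : MeasurableSet {z : ℝ × ℝ | t < z.2 ∧ z.2 ≤ z.1} :=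
    (measurableSet_lt measurable_const measurable_snd).inter
      (measurableSet_le measurable_snd measurable_fst)
  have hmeas2 : MeasurableSet {z : ℝ × ℝ | t < z.1 ∧ z.1 ≤ z.2} :=
    (measurableSet_lt measurable_const measurable_fst).inter
      (measurableSet_le measurable_fst measurable_snd)
  have hmeasq : MeasurableSet {z : ℝ × ℝ | t < z.1 ∧ t < z.2} :=
    (measurableSet_lt measurable_const measurable_fst).inter
      (measurableSet_lt measurable_const measurable_snd)
  have hmeasd : MeasurableSet {z : ℝ × ℝ | z.1 = z.2} :=
    measurableSet_eq_fun measurable_fst measurable_snd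
  have hI : Integrable (Function.uncurry fun v u => if t < u ∧ u ≤ v then (1:ℝ) else 0)
      (μ.prod μ) := by
    refine intgBdd _ ?_ 1 ?_
    · exact Measurable.ite hmeas1 measurable_const measurable_const
    · intro z; simp only [Function.uncurry]; split_ifs <;> norm_num
  rw [integral_integral hI]
  have hI1 : Integrable (fun z : ℝ × ℝ => if t < z.2 ∧ z.2 ≤ z.1 then (1:ℝ) else 0) (μ.prod μ) := by
    refine intgBdd _ ?_ 1 ?_
    · exact Measurable.ite hmeas1 measurable_const measurable_const
    · intro z; split_ifs <;> norm_num
  have hI2 : Integrable (fun z : ℝ × ℝ => if t < z.1 ∧ z.1 ≤ z.2 then (1:ℝ) else 0) (μ.prod μ) := by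
    refine intgBdd _ ?_ 1 ?_
    · exact Measurable.ite hmeas2 measurable_const measurable_const
    · intro z; split_ifs <;> norm_num
  have hIq : Integrable (fun z : ℝ × ℝ => if t < z.1 ∧ t < z.2 then (1:ℝ) else 0) (μ.prod μ) := by
    refine intgBdd _ ?_ 1 ?_
    · exact Measurable.ite hmeasq measurable_const measurable_const
    · intro z; split_ifs <;> norm_num
  have hId : Integrable (fun z : ℝ × ℝ => if z.1 = z.2 then (1:ℝ) else 0) (μ.prod μ) := by
    refine intgBdd _ ?_ 1 ?_
    · exact Measurable.ite hmeasd measurable_const measurable_const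
    · intro z; split_ifs <;> norm_num
  have hswap : ∫ z : ℝ × ℝ, (if t < z.1 ∧ z.1 ≤ z.2 then (1:ℝ) else 0) ∂(μ.prod μ)
      = ∫ z : ℝ × ℝ, (if t < z.2 ∧ z.2 ≤ z.1 then (1:ℝ) else 0) ∂(μ.prod μ) := by
    have h := integral_prod_swap (μ := μ) (ν := μ)
      (fun z : ℝ × ℝ => if t < z.2 ∧ z.2 ≤ z.1 then (1:ℝ) else 0)
    exact h.symm ▸ rfl
  have hsqval : ∫ z : ℝ × ℝ, (if t < z.1 ∧ t < z.2 then (1:ℝ) else 0) ∂(μ.prod μ)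
      = (1 - F t)^2 := by
    rw [intIf (μ.prod μ) (fun z : ℝ × ℝ => t < z.1 ∧ t < z.2) hmeasq 1, mul_one]
    have hset : {z : ℝ × ℝ | t < z.1 ∧ t < z.2} = Ioi t ×ˢ Ioi t := by
      ext z; simp [Set.mem_prod]
    rw [hset, Measure.prod_prod, ENNReal.toReal_mul, auxIoi hF t]
    ring
  have hdval := auxDiag hatom
  -- two-sided bounds
  have hlow : (1 - F t)^2 ≤ 2 * ∫ z : ℝ × ℝ, (if t < z.2 ∧ z.2 ≤ z.1 then (1:ℝ) else 0) ∂(μ.prod μ) := by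
    rw [← hsqval]
    have hmono : ∫ z : ℝ × ℝ, (if t < z.1 ∧ t < z.2 then (1:ℝ) else 0) ∂(μ.prod μ)
        ≤ ∫ z : ℝ × ℝ, ((if t < z.2 ∧ z.2 ≤ z.1 then (1:ℝ) else 0)
            + (if t < z.1 ∧ z.1 ≤ z.2 then (1:ℝ) else 0)) ∂(μ.prod μ) := by
      refine integral_mono hIq (hI1.add hI2) ?_
      intro z
      by_cases h1 : t < z.1 <;> by_cases h2 : t < z.2 <;> rcases le_total z.1 z.2 with h3 | h3 <;>
        simp [h1, h2, h3] <;> first | positivity | linarith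
    rw [integral_add hI1 hI2, hswap] at hmono
    linarith
  have hhigh : 2 * ∫ z : ℝ × ℝ, (if t < z.2 ∧ z.2 ≤ z.1 then (1:ℝ) else 0) ∂(μ.prod μ)
      ≤ (1 - F t)^2 := by
    have hmono : ∫ z : ℝ × ℝ, ((if t < z.2 ∧ z.2 ≤ z.1 then (1:ℝ) else 0)
          + (if t < z.1 ∧ z.1 ≤ z.2 then (1:ℝ) else 0)) ∂(μ.prod μ)
        ≤ ∫ z : ℝ × ℝ, ((if t < z.1 ∧ t < z.2 then (1:ℝ) else 0)
            + (if z.1 = z.2 then (1:ℝ) else 0)) ∂(μ.prod μ) := by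
      refine integral_mono (hI1.add hI2) (hIq.add hId) ?_
      intro z
      beta_reduce
      rcases eq_or_ne z.1 z.2 with heq | hne
      · rw [heq]
        by_cases h1 : t < z.2 <;> simp [h1]
      · by_cases h1 : t < z.1 <;> by_cases h2 : t < z.2 <;>
          rcases lt_or_gt_of_ne hne with h3 | h3 <;>
          simp [h1, h2, h3.le, not_le.2 h3, hne] <;> first | positivity | linarith
    rw [integral_add hI1 hI2, hswap, integral_add hIq hId, hsqval, hdval] at hmono
    linarith
  linarith

lemma auxK1 (hF : ∀ v, F v = (μ (Set.Iic v)).toReal) (hcont : Continuous F) (t : ℝ) :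
    ∫ c, (if c ≤ t then F t - F c else 0) ∂μ = (F t)^2/2 := by
  have hatom := auxAtom hF hcont
  have step1 : ∀ c : ℝ, (if c ≤ t then F t - F c else 0)
      = ∫ u, (if c < u ∧ u ≤ t then (1:ℝ) else 0) ∂μ := by
    intro c
    rw [intIf μ (fun u => c < u ∧ u ≤ t)
      ((measurableSet_lt measurable_const measurable_id).inter
        (measurableSet_le measurable_id measurable_const)) 1, mul_one]
    have hset : {u : ℝ | c < u ∧ u ≤ t} = Ioc c t := rfl
    rw [hset]
    by_cases h : c ≤ t
    · rw [if_pos h, auxIoc hF h]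
    · rw [if_neg h, Set.Ioc_eq_empty (fun h' => h h'.le)]
      simp [hF]
  simp_rw [step1]
  have hmeas1 : MeasurableSet {z : ℝ × ℝ | z.1 < z.2 ∧ z.2 ≤ t} :=
    (measurableSet_lt measurable_fst measurable_snd).inter
      (measurableSet_le measurable_snd measurable_const)
  have hmeas2 : MeasurableSet {z : ℝ × ℝ | z.2 < z.1 ∧ z.1 ≤ t} :=
    (measurableSet_lt measurable_snd measurable_fst).inter
      (measurableSet_le measurable_fst measurable_const)
  have hmeasq : MeasurableSet {z : ℝ × ℝ | z.1 ≤ t ∧ z.2 ≤ t} :=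
    (measurableSet_le measurable_fst measurable_const).inter
      (measurableSet_le measurable_snd measurable_const)
  have hmeasd : MeasurableSet {z : ℝ × ℝ | z.1 = z.2} :=
    measurableSet_eq_fun measurable_fst measurable_snd
  have hI : Integrable (Function.uncurry fun c u => if c < u ∧ u ≤ t then (1:ℝ) else 0)
      (μ.prod μ) := by
    refine intgBdd _ ?_ 1 ?_
    · exact Measurable.ite hmeas1 measurable_const measurable_const
    · intro z; simp only [Function.uncurry]; split_ifs <;> norm_num
  rw [integral_integral hI]
  have hI1 : Integrable (fun z : ℝ × ℝ => if z.1 < z.2 ∧ z.2 ≤ t then (1:ℝ) else 0) (μ.prod μ) := by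
    refine intgBdd _ ?_ 1 ?_
    · exact Measurable.ite hmeas1 measurable_const measurable_const
    · intro z; split_ifs <;> norm_num
  have hI2 : Integrable (fun z : ℝ × ℝ => if z.2 < z.1 ∧ z.1 ≤ t then (1:ℝ) else 0) (μ.prod μ) := by
    refine intgBdd _ ?_ 1 ?_
    · exact Measurable.ite hmeas2 measurable_const measurable_const
    · intro z; split_ifs <;> norm_num
  have hIq : Integrable (fun z : ℝ × ℝ => if z.1 ≤ t ∧ z.2 ≤ t then (1:ℝ) else 0) (μ.prod μ) := by
    refine intgBdd _ ?_ 1 ?_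
    · exact Measurable.ite hmeasq measurable_const measurable_const
    · intro z; split_ifs <;> norm_num
  have hId : Integrable (fun z : ℝ × ℝ => if z.1 = z.2 then (1:ℝ) else 0) (μ.prod μ) := by
    refine intgBdd _ ?_ 1 ?_
    · exact Measurable.ite hmeasd measurable_const measurable_const
    · intro z; split_ifs <;> norm_num
  have hswap : ∫ z : ℝ × ℝ, (if z.2 < z.1 ∧ z.1 ≤ t then (1:ℝ) else 0) ∂(μ.prod μ)
      = ∫ z : ℝ × ℝ, (if z.1 < z.2 ∧ z.2 ≤ t then (1:ℝ) else 0) ∂(μ.prod μ) := by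
    have h := integral_prod_swap (μ := μ) (ν := μ)
      (fun z : ℝ × ℝ => if z.1 < z.2 ∧ z.2 ≤ t then (1:ℝ) else 0)
    exact h.symm ▸ rfl
  have hsqval : ∫ z : ℝ × ℝ, (if z.1 ≤ t ∧ z.2 ≤ t then (1:ℝ) else 0) ∂(μ.prod μ)
      = (F t)^2 := by
    rw [intIf (μ.prod μ) (fun z : ℝ × ℝ => z.1 ≤ t ∧ z.2 ≤ t) hmeasq 1, mul_one]
    have hset : {z : ℝ × ℝ | z.1 ≤ t ∧ z.2 ≤ t} = Iic t ×ˢ Iic t := by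
      ext z; simp only [Set.mem_setOf_eq, Set.mem_prod, Set.mem_Iic]
    rw [hset, Measure.prod_prod, ENNReal.toReal_mul, ← hF t]
    ring
  have hdval := auxDiag hatom
  have hhigh : 2 * ∫ z : ℝ × ℝ, (if z.1 < z.2 ∧ z.2 ≤ t then (1:ℝ) else 0) ∂(μ.prod μ)
      ≤ (F t)^2 := by
    rw [← hsqval]
    have hmono : ∫ z : ℝ × ℝ, ((if z.1 < z.2 ∧ z.2 ≤ t then (1:ℝ) else 0)
          + (if z.2 < z.1 ∧ z.1 ≤ t then (1:ℝ) else 0)) ∂(μ.prod μ)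
        ≤ ∫ z : ℝ × ℝ, (if z.1 ≤ t ∧ z.2 ≤ t then (1:ℝ) else 0) ∂(μ.prod μ) := by
      refine integral_mono (hI1.add hI2) hIq ?_
      intro z
      beta_reduce
      by_cases h1 : z.1 ≤ t <;> by_cases h2 : z.2 ≤ t <;>
        rcases lt_trichotomy z.1 z.2 with h3 | h3 | h3 <;>
        simp [h1, h2, h3, h3.le, not_lt.2 h3.le, lt_irrefl] <;>
        first | positivity | linarith
    rw [integral_add hI1 hI2, hswap] at hmono
    linarith
  have hlow : (F t)^2 ≤ (2 * ∫ z : ℝ × ℝ, (if z.1 < z.2 ∧ z.2 ≤ t then (1:ℝ) else 0) ∂(μ.prod μ)) := by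
    have hmono : ∫ z : ℝ × ℝ, (if z.1 ≤ t ∧ z.2 ≤ t then (1:ℝ) else 0) ∂(μ.prod μ)
        ≤ ∫ z : ℝ × ℝ, (((if z.1 < z.2 ∧ z.2 ≤ t then (1:ℝ) else 0)
          + (if z.2 < z.1 ∧ z.1 ≤ t then (1:ℝ) else 0))
          + (if z.1 = z.2 then (1:ℝ) else 0)) ∂(μ.prod μ) := by
      have hI12 : Integrable (fun z : ℝ × ℝ => (if z.1 < z.2 ∧ z.2 ≤ t then (1:ℝ) else 0)
          + (if z.2 < z.1 ∧ z.1 ≤ t then (1:ℝ) else 0)) (μ.prod μ) := hI1.add hI2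
      refine integral_mono hIq (hI12.add hId) ?_
      intro z
      beta_reduce
      rcases eq_or_ne z.1 z.2 with heq | hne
      · rw [heq]
        by_cases h2 : z.2 ≤ t <;> simp [h2, lt_irrefl]
      · by_cases h1 : z.1 ≤ t <;> by_cases h2 : z.2 ≤ t <;>
          rcases lt_or_gt_of_ne hne with h3 | h3 <;>
          simp [h1, h2, h3, h3.le, not_lt.2 h3.le, hne] <;>
          first | positivity | linarith
    have hI12 : Integrable (fun z : ℝ × ℝ => (if z.1 < z.2 ∧ z.2 ≤ t then (1:ℝ) else 0)
        + (if z.2 < z.1 ∧ z.1 ≤ t then (1:ℝ) else 0)) (μ.prod μ) := hI1.add hI2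
    rw [integral_add hI12 hId, integral_add hI1 hI2, hswap, hsqval, hdval] at hmono
    linarith
  linarith

lemma auxJ2 (hF : ∀ v, F v = (μ (Set.Iic v)).toReal) (hcont : Continuous F) (t : ℝ) :
    (1 - F t)^3/4 ≤ ∫ v, (if t < v then (F v - F t)^2 else 0) ∂μ := by
  have hFm : Measurable F := hcont.measurable
  have h01 := aux01 (μ := μ) hF
  have hms : MeasurableSet {v : ℝ | t < v} := measurableSet_lt measurable_const measurable_id
  have hIa : Integrable (fun v => if t < v then (F v - F t)^2 else 0) μ := by
    refine intgBdd _ ?_ 1 ?_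
    · exact Measurable.ite hms ((hFm.sub measurable_const).pow_const 2) measurable_const
    · intro v; split_ifs <;> rw [abs_of_nonneg (by positivity)]
      · nlinarith [(h01 v).1, (h01 v).2, (h01 t).1, (h01 t).2]
      · norm_num
  have hIb : Integrable (fun v => if t < v then F v - F t else 0) μ := by
    refine intgBdd _ ?_ 1 ?_
    · exact Measurable.ite hms (hFm.sub measurable_const) measurable_const
    · intro v; split_ifs
      · rw [abs_le]; constructor <;> nlinarith [(h01 v).1, (h01 v).2, (h01 t).1, (h01 t).2]
      · norm_num
  have hIc : Integrable (fun v => if t < v then (1:ℝ) else 0) μ := by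
    refine intgBdd _ ?_ 1 ?_
    · exact Measurable.ite hms measurable_const measurable_const
    · intro v; split_ifs <;> norm_num
  have hIcval : ∫ v, (if t < v then (1:ℝ) else 0) ∂μ = 1 - F t := by
    rw [intIf μ (fun v => t < v) hms 1, mul_one]
    have hset : {v : ℝ | t < v} = Ioi t := rfl
    rw [hset, auxIoi hF]
  have key : ∀ v, (if t < v then (F v - F t - (1 - F t)/2)^2 else 0)
      = (if t < v then (F v - F t)^2 else 0) - (1 - F t) * (if t < v then F v - F t else 0)
        + ((1 - F t)^2/4) * (if t < v then (1:ℝ) else 0) := by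
    intro v; split_ifs
    · ring
    · ring
  have hW : 0 ≤ ∫ v, (if t < v then (F v - F t - (1 - F t)/2)^2 else 0) ∂μ := by
    refine integral_nonneg ?_
    intro v; dsimp only; split_ifs
    · positivity
    · exact le_refl 0
  simp_rw [key] at hW
  have hT1 : Integrable (fun v => (if t < v then (F v - F t)^2 else 0)
      - (1 - F t) * (if t < v then F v - F t else 0)) μ := hIa.sub (hIb.const_mul _)
  have hT2 : Integrable (fun v => ((1 - F t)^2/4) * (if t < v then (1:ℝ) else 0)) μ :=
    hIc.const_mul _
  rw [integral_add hT1 hT2,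
    integral_sub hIa (hIb.const_mul _), integral_const_mul, integral_const_mul,
    auxJ1 hF hcont t, hIcval] at hW
  nlinarith [hW]

lemma auxK2 (hF : ∀ v, F v = (μ (Set.Iic v)).toReal) (hcont : Continuous F) (t : ℝ) :
    (F t)^3/4 ≤ ∫ c, (if c ≤ t then (F t - F c)^2 else 0) ∂μ := by
  have hFm : Measurable F := hcont.measurable
  have h01 := aux01 (μ := μ) hF
  have hms : MeasurableSet {c : ℝ | c ≤ t} := measurableSet_le measurable_id measurable_const
  have hIa : Integrable (fun c => if c ≤ t then (F t - F c)^2 else 0) μ := by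
    refine intgBdd _ ?_ 1 ?_
    · exact Measurable.ite hms (((measurable_const (a := F t)).sub hFm).pow_const 2) measurable_const
    · intro c; split_ifs <;> rw [abs_of_nonneg (by positivity)]
      · nlinarith [(h01 c).1, (h01 c).2, (h01 t).1, (h01 t).2]
      · norm_num
  have hIb : Integrable (fun c => if c ≤ t then F t - F c else 0) μ := by
    refine intgBdd _ ?_ 1 ?_
    · exact Measurable.ite hms ((measurable_const (a := F t)).sub hFm) measurable_const
    · intro c; split_ifs
      · rw [abs_le]; constructor <;> nlinarith [(h01 c).1, (h01 c).2, (h01 t).1, (h01 t).2]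
      · norm_num
  have hIc : Integrable (fun c => if c ≤ t then (1:ℝ) else 0) μ := by
    refine intgBdd _ ?_ 1 ?_
    · exact Measurable.ite hms measurable_const measurable_const
    · intro c; split_ifs <;> norm_num
  have hIcval : ∫ c, (if c ≤ t then (1:ℝ) else 0) ∂μ = F t := by
    rw [intIf μ (fun c => c ≤ t) hms 1, mul_one]
    have hset : {c : ℝ | c ≤ t} = Iic t := rfl
    rw [hset, ← hF t]
  have key : ∀ c, (if c ≤ t then (F t - F c - F t/2)^2 else 0)
      = (if c ≤ t then (F t - F c)^2 else 0) - F t * (if c ≤ t then F t - F c else 0)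
        + ((F t)^2/4) * (if c ≤ t then (1:ℝ) else 0) := by
    intro c; split_ifs
    · ring
    · ring
  have hW : 0 ≤ ∫ c, (if c ≤ t then (F t - F c - F t/2)^2 else 0) ∂μ := by
    refine integral_nonneg ?_
    intro c; dsimp only; split_ifs
    · positivity
    · exact le_refl 0
  simp_rw [key] at hW
  have hT1 : Integrable (fun c => (if c ≤ t then (F t - F c)^2 else 0)
      - F t * (if c ≤ t then F t - F c else 0)) μ := hIa.sub (hIb.const_mul _)
  have hT2 : Integrable (fun c => ((F t)^2/4) * (if c ≤ t then (1:ℝ) else 0)) μ :=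
    hIc.const_mul _
  rw [integral_add hT1 hT2,
    integral_sub hIa (hIb.const_mul _), integral_const_mul, integral_const_mul,
    auxK1 hF hcont t, hIcval] at hW
  nlinarith [hW]

lemma auxSlice (hF : ∀ v, F v = (μ (Set.Iic v)).toReal) (hcont : Continuous F) (t : ℝ) :
    (1/12) * ((1 - F t) * F t)
      ≤ ∫ z : ℝ × ℝ, (if z.2 ≤ t ∧ t < z.1 then (F z.1 - F z.2)^2 else 0) ∂(μ.prod μ) := by
  have hFm : Measurable F := hcont.measurable
  have h01 := aux01 (μ := μ) hF
  have hmono := auxMono (μ := μ) hF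
  have hms1 : MeasurableSet {v : ℝ | t < v} := measurableSet_lt measurable_const measurable_id
  have hms2 : MeasurableSet {c : ℝ | c ≤ t} := measurableSet_le measurable_id measurable_const
  -- marginal integrability
  have hIa1 : Integrable (fun v => if t < v then (F v - F t)^2 else 0) μ := by
    refine intgBdd _ ?_ 1 ?_
    · exact Measurable.ite hms1 ((hFm.sub measurable_const).pow_const 2) measurable_const
    · intro v; split_ifs <;> rw [abs_of_nonneg (by positivity)]
      · nlinarith [(h01 v).1, (h01 v).2, (h01 t).1, (h01 t).2]
      · norm_num
  have hIa2 : Integrable (fun c => if c ≤ t then (F t - F c)^2 else 0) μ := by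
    refine intgBdd _ ?_ 1 ?_
    · exact Measurable.ite hms2 (((measurable_const (a := F t)).sub hFm).pow_const 2)
        measurable_const
    · intro c; split_ifs <;> rw [abs_of_nonneg (by positivity)]
      · nlinarith [(h01 c).1, (h01 c).2, (h01 t).1, (h01 t).2]
      · norm_num
  have hIc1 : Integrable (fun v => if t < v then (1:ℝ) else 0) μ := by
    refine intgBdd _ ?_ 1 ?_
    · exact Measurable.ite hms1 measurable_const measurable_const
    · intro v; split_ifs <;> norm_num
  have hIc2 : Integrable (fun c => if c ≤ t then (1:ℝ) else 0) μ := by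
    refine intgBdd _ ?_ 1 ?_
    · exact Measurable.ite hms2 measurable_const measurable_const
    · intro c; split_ifs <;> norm_num
  have hIc1val : ∫ v, (if t < v then (1:ℝ) else 0) ∂μ = 1 - F t := by
    rw [intIf μ (fun v => t < v) hms1 1, mul_one]
    exact auxIoi hF t
  have hIc2val : ∫ c, (if c ≤ t then (1:ℝ) else 0) ∂μ = F t := by
    rw [intIf μ (fun c => c ≤ t) hms2 1, mul_one,
      show {c : ℝ | c ≤ t} = Iic t from rfl, ← hF t]
  -- product integrands
  have hB1 : Integrable (fun z : ℝ × ℝ =>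
      (if t < z.1 then (F z.1 - F t)^2 else 0) * (if z.2 ≤ t then (1:ℝ) else 0)) (μ.prod μ) :=
    hIa1.mul_prod hIc2
  have hB2 : Integrable (fun z : ℝ × ℝ =>
      (if t < z.1 then (1:ℝ) else 0) * (if z.2 ≤ t then (F t - F z.2)^2 else 0)) (μ.prod μ) :=
    hIc1.mul_prod hIa2
  have hmsa : MeasurableSet {z : ℝ × ℝ | z.2 ≤ t ∧ t < z.1} :=
    (measurableSet_le measurable_snd measurable_const).inter
      (measurableSet_lt measurable_const measurable_fst)
  have hIA : Integrable (fun z : ℝ × ℝ =>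
      if z.2 ≤ t ∧ t < z.1 then (F z.1 - F z.2)^2 else 0) (μ.prod μ) := by
    refine intgBdd _ ?_ 1 ?_
    · exact Measurable.ite hmsa
        (((hFm.comp measurable_fst).sub (hFm.comp measurable_snd)).pow_const 2) measurable_const
    · intro z; split_ifs <;> rw [abs_of_nonneg (by positivity)]
      · nlinarith [(h01 z.1).1, (h01 z.1).2, (h01 z.2).1, (h01 z.2).2]
      · norm_num
  have hpt : ∀ z : ℝ × ℝ,
      (if t < z.1 then (F z.1 - F t)^2 else 0) * (if z.2 ≤ t then (1:ℝ) else 0)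
        + (if t < z.1 then (1:ℝ) else 0) * (if z.2 ≤ t then (F t - F z.2)^2 else 0)
      ≤ (if z.2 ≤ t ∧ t < z.1 then (F z.1 - F z.2)^2 else 0) := by
    intro z
    by_cases h1 : t < z.1 <;> by_cases h2 : z.2 ≤ t <;> simp [h1, h2]
    nlinarith [mul_nonneg (sub_nonneg.2 (hmono h1.le)) (sub_nonneg.2 (hmono h2))]
  have hmono2 : ∫ z : ℝ × ℝ,
      ((if t < z.1 then (F z.1 - F t)^2 else 0) * (if z.2 ≤ t then (1:ℝ) else 0)
        + (if t < z.1 then (1:ℝ) else 0) * (if z.2 ≤ t then (F t - F z.2)^2 else 0)) ∂(μ.prod μ)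
      ≤ ∫ z : ℝ × ℝ, (if z.2 ≤ t ∧ t < z.1 then (F z.1 - F z.2)^2 else 0) ∂(μ.prod μ) :=
    integral_mono (hB1.add hB2) hIA hpt
  rw [integral_add hB1 hB2,
    show (∫ z : ℝ × ℝ, (if t < z.1 then (F z.1 - F t)^2 else 0)
        * (if z.2 ≤ t then (1:ℝ) else 0) ∂(μ.prod μ))
      = (∫ v, (if t < v then (F v - F t)^2 else 0) ∂μ) * ∫ c, (if c ≤ t then (1:ℝ) else 0) ∂μ
      from integral_prod_mul (fun v => if t < v then (F v - F t)^2 else 0)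
        (fun c => if c ≤ t then (1:ℝ) else 0),
    show (∫ z : ℝ × ℝ, (if t < z.1 then (1:ℝ) else 0)
        * (if z.2 ≤ t then (F t - F z.2)^2 else 0) ∂(μ.prod μ))
      = (∫ v, (if t < v then (1:ℝ) else 0) ∂μ) * ∫ c, (if c ≤ t then (F t - F c)^2 else 0) ∂μ
      from integral_prod_mul (fun v => if t < v then (1:ℝ) else 0)
        (fun c => if c ≤ t then (F t - F c)^2 else 0),
    hIc1val, hIc2val] at hmono2
  have hJ2 := auxJ2 hF hcont t
  have hK2 := auxK2 hF hcont t
  have hx : (0:ℝ) ≤ F t := (h01 t).1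
  have hy : F t ≤ 1 := (h01 t).2
  have e1 : (1 - F t)^3/4 * F t ≤ (∫ v, (if t < v then (F v - F t)^2 else 0) ∂μ) * F t :=
    mul_le_mul_of_nonneg_right hJ2 hx
  have e2 : (1 - F t) * ((F t)^3/4) ≤ (1 - F t) * ∫ c, (if c ≤ t then (F t - F c)^2 else 0) ∂μ :=
    mul_le_mul_of_nonneg_left hK2 (by linarith)
  nlinarith [mul_nonneg (mul_nonneg (by linarith : (0:ℝ) ≤ 1 - F t) hx)
    (sq_nonneg (1 - 2 * F t)), mul_nonneg (by linarith : (0:ℝ) ≤ 1 - F t) hx]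

lemma auxAbsInt (hint : Integrable id μ) :
    Integrable (fun z : ℝ × ℝ => |z.1| + |z.2|) (μ.prod μ) := by
  have h1 : MeasurePreserving (Prod.fst : ℝ × ℝ → ℝ) (μ.prod μ) μ :=
    ⟨measurable_fst, by simp [Measure.map_fst_prod]⟩
  have h2 : MeasurePreserving (Prod.snd : ℝ × ℝ → ℝ) (μ.prod μ) μ :=
    ⟨measurable_snd, by simp [Measure.map_snd_prod]⟩
  have habs : Integrable (fun x : ℝ => |x|) μ := hint.abs
  have i1 : Integrable (fun z : ℝ × ℝ => |z.1|) (μ.prod μ) :=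
    (h1.integrable_comp habs.aestronglyMeasurable).2 habs
  have i2 : Integrable (fun z : ℝ × ℝ => |z.2|) (μ.prod μ) :=
    (h2.integrable_comp habs.aestronglyMeasurable).2 habs
  exact i1.add i2

lemma auxLayer {Q : ℝ × ℝ → ℝ} (hQm : Measurable Q) (hQ0 : ∀ z, 0 ≤ Q z) :
    ∫⁻ z : ℝ × ℝ, ENNReal.ofReal ((if z.2 ≤ z.1 then z.1 - z.2 else 0) * Q z) ∂(μ.prod μ)
      = ∫⁻ t : ℝ, ∫⁻ z : ℝ × ℝ,
          (if z.2 ≤ t ∧ t < z.1 then ENNReal.ofReal (Q z) else 0) ∂(μ.prod μ) ∂(volume) := by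
  have key : ∀ z : ℝ × ℝ, ENNReal.ofReal ((if z.2 ≤ z.1 then z.1 - z.2 else 0) * Q z)
      = ∫⁻ t, (if z.2 ≤ t ∧ t < z.1 then ENNReal.ofReal (Q z) else 0) ∂(volume) := by
    intro z
    have h1 : ∀ t : ℝ, (if z.2 ≤ t ∧ t < z.1 then ENNReal.ofReal (Q z) else 0)
        = (Ico z.2 z.1).indicator (fun _ => ENNReal.ofReal (Q z)) t := by
      intro t; by_cases h : z.2 ≤ t ∧ t < z.1
      · rw [if_pos h, Set.indicator_of_mem (mem_Ico.mpr h)]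
      · rw [if_neg h, Set.indicator_of_notMem (fun hc => h (mem_Ico.mp hc))]
    simp_rw [h1]
    rw [lintegral_indicator_const measurableSet_Ico, Real.volume_Ico]
    by_cases h : z.2 ≤ z.1
    · rw [if_pos h, ENNReal.ofReal_mul (show (0:ℝ) ≤ z.1 - z.2 by linarith), mul_comm]
    · rw [if_neg h, zero_mul, ENNReal.ofReal_zero,
        ENNReal.ofReal_of_nonpos (show z.1 - z.2 ≤ 0 by linarith [not_le.1 h]), mul_zero]
  simp_rw [key]
  refine lintegral_lintegral_swap ?_
  apply Measurable.aemeasurable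
  have hset : MeasurableSet {p : (ℝ × ℝ) × ℝ | p.1.2 ≤ p.2 ∧ p.2 < p.1.1} :=
    (measurableSet_le measurable_fst.snd measurable_snd).inter
      (measurableSet_lt measurable_snd measurable_fst.fst)
  exact Measurable.ite hset
    (ENNReal.measurable_ofReal.comp (hQm.comp measurable_fst)) measurable_const

lemma auxOfReal {Q : ℝ × ℝ → ℝ} (t : ℝ) (hQ0 : ∀ z, 0 ≤ Q z)
    (hInt : Integrable (fun z : ℝ × ℝ => if z.2 ≤ t ∧ t < z.1 then Q z else 0) (μ.prod μ)) :
    ∫⁻ z : ℝ × ℝ, (if z.2 ≤ t ∧ t < z.1 then ENNReal.ofReal (Q z) else 0) ∂(μ.prod μ)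
      = ENNReal.ofReal
          (∫ z : ℝ × ℝ, (if z.2 ≤ t ∧ t < z.1 then Q z else 0) ∂(μ.prod μ)) := by
  rw [ofReal_integral_eq_lintegral_ofReal hInt (Eventually.of_forall fun z => by
    dsimp only; split_ifs
    · exact hQ0 z
    · exact le_refl 0)]
  congr 1
  ext z
  split_ifs <;> simp

end Aux

theorem stmt8 (μ : Measure ℝ) [IsProbabilityMeasure μ]
    (hμ : μ (Set.Iio 0) = 0) (hint : Integrable id μ)
    (F : ℝ → ℝ) (hF : ∀ v, F v = (μ (Set.Iic v)).toReal) (hcont : Continuous F) :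
    (∫ w : ℝ × ℝ, (∫ z : ℝ × ℝ,
        (if max w.1 w.2 ≤ z.1 ∧ z.2 ≤ min w.1 w.2 then z.1 - z.2 else 0)
          ∂(μ.prod μ)) ∂(μ.prod μ))
      ≥ (1/12) * ∫ z : ℝ × ℝ, (if z.2 ≤ z.1 then z.1 - z.2 else 0) ∂(μ.prod μ) := by
  have hFm : Measurable F := hcont.measurable
  have h01 := aux01 (μ := μ) hF
  have hmono := auxMono (μ := μ) hF
  have habs2 := auxAbsInt (μ := μ) hint
  -- Step 1 : reduce the LHS to a single integral
  have hsetf : MeasurableSet {p : (ℝ × ℝ) × (ℝ × ℝ) |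
      max p.1.1 p.1.2 ≤ p.2.1 ∧ p.2.2 ≤ min p.1.1 p.1.2} :=
    (measurableSet_le (measurable_fst.fst.max measurable_fst.snd) measurable_snd.fst).inter
      (measurableSet_le measurable_snd.snd (measurable_fst.fst.min measurable_fst.snd))
  have hPP : MeasurePreserving (Prod.snd : (ℝ × ℝ) × (ℝ × ℝ) → ℝ × ℝ)
      ((μ.prod μ).prod (μ.prod μ)) (μ.prod μ) :=
    ⟨measurable_snd, by simp [Measure.map_snd_prod]⟩
  have hbd : Integrable (fun p : (ℝ × ℝ) × (ℝ × ℝ) => |p.2.1| + |p.2.2|)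
      ((μ.prod μ).prod (μ.prod μ)) :=
    (hPP.integrable_comp habs2.aestronglyMeasurable).2 habs2
  have hIf : Integrable (Function.uncurry fun w z : ℝ × ℝ =>
      if max w.1 w.2 ≤ z.1 ∧ z.2 ≤ min w.1 w.2 then z.1 - z.2 else 0)
      ((μ.prod μ).prod (μ.prod μ)) := by
    refine Integrable.mono' hbd ?_ (Eventually.of_forall fun p => ?_)
    · exact (Measurable.ite hsetf (measurable_snd.fst.sub measurable_snd.snd)
        measurable_const).aestronglyMeasurable
    · simp only [Function.uncurry, Real.norm_eq_abs]
      split_ifs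
      · exact abs_sub _ _
      · simp [abs_nonneg, add_nonneg]
  have step1 : (∫ w : ℝ × ℝ, (∫ z : ℝ × ℝ,
        (if max w.1 w.2 ≤ z.1 ∧ z.2 ≤ min w.1 w.2 then z.1 - z.2 else 0)
          ∂(μ.prod μ)) ∂(μ.prod μ))
      = ∫ z : ℝ × ℝ, (if z.2 ≤ z.1 then z.1 - z.2 else 0) * (F z.1 - F z.2)^2 ∂(μ.prod μ) := by
    rw [show (∫ w : ℝ × ℝ, (∫ z : ℝ × ℝ,
        (if max w.1 w.2 ≤ z.1 ∧ z.2 ≤ min w.1 w.2 then z.1 - z.2 else 0)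
          ∂(μ.prod μ)) ∂(μ.prod μ))
      = ∫ z : ℝ × ℝ, (∫ w : ℝ × ℝ,
        (if max w.1 w.2 ≤ z.1 ∧ z.2 ≤ min w.1 w.2 then z.1 - z.2 else 0)
          ∂(μ.prod μ)) ∂(μ.prod μ) from integral_integral_swap hIf]
    refine integral_congr_ae (Eventually.of_forall fun z => ?_)
    dsimp only
    have hcond : ∀ w : ℝ × ℝ, (if max w.1 w.2 ≤ z.1 ∧ z.2 ≤ min w.1 w.2 then z.1 - z.2 else 0)
        = (if w ∈ Icc z.2 z.1 ×ˢ Icc z.2 z.1 then z.1 - z.2 else 0) := by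
      intro w
      refine if_congr ?_ rfl rfl
      simp only [max_le_iff, le_min_iff, Set.mem_prod, mem_Icc]
      tauto
    simp_rw [hcond]
    rw [intIf (μ.prod μ) (fun w => w ∈ Icc z.2 z.1 ×ˢ Icc z.2 z.1)
      (measurableSet_Icc.prod measurableSet_Icc) _,
      show {w : ℝ × ℝ | w ∈ Icc z.2 z.1 ×ˢ Icc z.2 z.1} = Icc z.2 z.1 ×ˢ Icc z.2 z.1 from rfl,
      Measure.prod_prod, ENNReal.toReal_mul]
    by_cases h : z.2 ≤ z.1
    · rw [auxIcc hF hcont h, if_pos h]; ring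
    · rw [Set.Icc_eq_empty h, if_neg h, measure_empty]
      simp
  rw [step1, ge_iff_le]
  -- notation
  have hQm : Measurable (fun z : ℝ × ℝ => (F z.1 - F z.2)^2) :=
    ((hFm.comp measurable_fst).sub (hFm.comp measurable_snd)).pow_const 2
  have hQ0 : ∀ z : ℝ × ℝ, 0 ≤ (F z.1 - F z.2)^2 := fun z => sq_nonneg _
  have hQ1 : ∀ z : ℝ × ℝ, (F z.1 - F z.2)^2 ≤ 1 := fun z => by
    nlinarith [(h01 z.1).1, (h01 z.1).2, (h01 z.2).1, (h01 z.2).2]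
  have hmsle : MeasurableSet {z : ℝ × ℝ | z.2 ≤ z.1} :=
    measurableSet_le measurable_snd measurable_fst
  have hPhim : Measurable (fun z : ℝ × ℝ => if z.2 ≤ z.1 then z.1 - z.2 else 0) :=
    Measurable.ite hmsle (measurable_fst.sub measurable_snd) measurable_const
  have hPhibd : ∀ z : ℝ × ℝ, |if z.2 ≤ z.1 then z.1 - z.2 else 0| ≤ |z.1| + |z.2| := by
    intro z; split_ifs
    · exact abs_sub _ _
    · rw [abs_zero]; positivity
  have hPhiI : Integrable (fun z : ℝ × ℝ => if z.2 ≤ z.1 then z.1 - z.2 else 0) (μ.prod μ) :=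
    Integrable.mono' habs2 hPhim.aestronglyMeasurable
      (Eventually.of_forall fun z => by simpa [Real.norm_eq_abs] using hPhibd z)
  have hGI : Integrable
      (fun z : ℝ × ℝ => (if z.2 ≤ z.1 then z.1 - z.2 else 0) * (F z.1 - F z.2)^2) (μ.prod μ) := by
    refine Integrable.mono' habs2 (hPhim.mul hQm).aestronglyMeasurable
      (Eventually.of_forall fun z => ?_)
    rw [Real.norm_eq_abs, abs_mul]
    calc |if z.2 ≤ z.1 then z.1 - z.2 else 0| * |(F z.1 - F z.2)^2|
        ≤ (|z.1| + |z.2|) * 1 := by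
          refine mul_le_mul (hPhibd z) ?_ (abs_nonneg _) (by positivity)
          rw [abs_of_nonneg (hQ0 z)]; exact hQ1 z
      _ = |z.1| + |z.2| := mul_one _
  have hPhinn : ∀ z : ℝ × ℝ, 0 ≤ (if z.2 ≤ z.1 then z.1 - z.2 else 0) := by
    intro z; split_ifs with h
    · linarith
    · exact le_refl 0
  have hGnn : ∀ z : ℝ × ℝ, 0 ≤ (if z.2 ≤ z.1 then z.1 - z.2 else 0) * (F z.1 - F z.2)^2 :=
    fun z => mul_nonneg (hPhinn z) (hQ0 z)
  have hGof := ofReal_integral_eq_lintegral_ofReal hGI (Eventually.of_forall hGnn)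
  have hPhiof := ofReal_integral_eq_lintegral_ofReal hPhiI (Eventually.of_forall hPhinn)
  -- per-threshold facts
  have hmsS : ∀ t : ℝ, MeasurableSet {z : ℝ × ℝ | z.2 ≤ t ∧ t < z.1} := fun t =>
    (measurableSet_le measurable_snd measurable_const).inter
      (measurableSet_lt measurable_const measurable_fst)
  have hIQslice : ∀ t : ℝ, Integrable
      (fun z : ℝ × ℝ => if z.2 ≤ t ∧ t < z.1 then (F z.1 - F z.2)^2 else 0) (μ.prod μ) := by
    intro t
    refine intgBdd _ ?_ 1 ?_
    · exact Measurable.ite (hmsS t) hQm measurable_const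
    · intro z; split_ifs
      · rw [abs_of_nonneg (hQ0 z)]; exact hQ1 z
      · norm_num
  have hI1slice : ∀ t : ℝ, Integrable
      (fun z : ℝ × ℝ => if z.2 ≤ t ∧ t < z.1 then (1:ℝ) else 0) (μ.prod μ) := by
    intro t
    refine intgBdd _ ?_ 1 ?_
    · exact Measurable.ite (hmsS t) measurable_const measurable_const
    · intro z; split_ifs <;> norm_num
  have hHval : ∀ t : ℝ, ∫ z : ℝ × ℝ, (if z.2 ≤ t ∧ t < z.1 then (1:ℝ) else 0) ∂(μ.prod μ)
      = (1 - F t) * F t := by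
    intro t
    rw [intIf (μ.prod μ) (fun z : ℝ × ℝ => z.2 ≤ t ∧ t < z.1) (hmsS t) 1, mul_one,
      show {z : ℝ × ℝ | z.2 ≤ t ∧ t < z.1} = Ioi t ×ˢ Iic t from by
        ext z; simp only [Set.mem_setOf_eq, Set.mem_prod, mem_Ioi, mem_Iic]; tauto,
      Measure.prod_prod, ENNReal.toReal_mul, auxIoi hF t, ← hF t]
  -- measurability of the inner lintegral as a function of t
  have hmeasIphi : Measurable (fun t : ℝ => ∫⁻ z : ℝ × ℝ,
      (if z.2 ≤ t ∧ t < z.1 then ENNReal.ofReal (1:ℝ) else 0) ∂(μ.prod μ)) := by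
    have hsetp : MeasurableSet {p : ℝ × (ℝ × ℝ) | p.2.2 ≤ p.1 ∧ p.1 < p.2.1} :=
      (measurableSet_le measurable_snd.snd measurable_fst).inter
        (measurableSet_lt measurable_fst measurable_snd.fst)
    exact Measurable.lintegral_prod_right'
      (f := fun p : ℝ × (ℝ × ℝ) => if p.2.2 ≤ p.1 ∧ p.1 < p.2.1
        then ENNReal.ofReal (1:ℝ) else 0)
      (Measurable.ite hsetp measurable_const measurable_const)
  -- layer-cake rewrites
  have eG : (∫⁻ z : ℝ × ℝ, ENNReal.ofReal
        ((if z.2 ≤ z.1 then z.1 - z.2 else 0) * (F z.1 - F z.2)^2) ∂(μ.prod μ))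
      = ∫⁻ t : ℝ, ∫⁻ z : ℝ × ℝ,
          (if z.2 ≤ t ∧ t < z.1 then ENNReal.ofReal ((F z.1 - F z.2)^2) else 0)
            ∂(μ.prod μ) ∂(volume) :=
    auxLayer hQm hQ0
  have ePhi0 : (∫⁻ z : ℝ × ℝ, ENNReal.ofReal
        ((if z.2 ≤ z.1 then z.1 - z.2 else 0) * (1:ℝ)) ∂(μ.prod μ))
      = ∫⁻ t : ℝ, ∫⁻ z : ℝ × ℝ,
          (if z.2 ≤ t ∧ t < z.1 then ENNReal.ofReal (1:ℝ) else 0)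
            ∂(μ.prod μ) ∂(volume) :=
    auxLayer measurable_const (fun _ => zero_le_one)
  simp only [mul_one] at ePhi0
  -- per-threshold inequality in ℝ≥0∞
  have hperT : ∀ t : ℝ, ENNReal.ofReal (1/12) * (∫⁻ z : ℝ × ℝ,
        (if z.2 ≤ t ∧ t < z.1 then ENNReal.ofReal (1:ℝ) else 0) ∂(μ.prod μ))
      ≤ ∫⁻ z : ℝ × ℝ,
        (if z.2 ≤ t ∧ t < z.1 then ENNReal.ofReal ((F z.1 - F z.2)^2) else 0) ∂(μ.prod μ) := by
    intro t
    have e1 : (∫⁻ z : ℝ × ℝ,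
          (if z.2 ≤ t ∧ t < z.1 then ENNReal.ofReal ((F z.1 - F z.2)^2) else 0) ∂(μ.prod μ))
        = ENNReal.ofReal (∫ z : ℝ × ℝ,
            (if z.2 ≤ t ∧ t < z.1 then (F z.1 - F z.2)^2 else 0) ∂(μ.prod μ)) :=
      auxOfReal t (fun z => sq_nonneg _) (hIQslice t)
    have e2 : (∫⁻ z : ℝ × ℝ,
          (if z.2 ≤ t ∧ t < z.1 then ENNReal.ofReal (1:ℝ) else 0) ∂(μ.prod μ))
        = ENNReal.ofReal (∫ z : ℝ × ℝ,
            (if z.2 ≤ t ∧ t < z.1 then (1:ℝ) else 0) ∂(μ.prod μ)) :=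
      auxOfReal t (fun _ => zero_le_one) (hI1slice t)
    rw [e1, e2, hHval t, ← ENNReal.ofReal_mul (by norm_num : (0:ℝ) ≤ 1/12)]
    exact ENNReal.ofReal_le_ofReal (auxSlice hF hcont t)
  have hkeyfull : ENNReal.ofReal (1/12)
        * (∫⁻ z : ℝ × ℝ, ENNReal.ofReal (if z.2 ≤ z.1 then z.1 - z.2 else 0) ∂(μ.prod μ))
      ≤ ∫⁻ z : ℝ × ℝ, ENNReal.ofReal
          ((if z.2 ≤ z.1 then z.1 - z.2 else 0) * (F z.1 - F z.2)^2) ∂(μ.prod μ) := by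
    rw [ePhi0, eG, ← lintegral_const_mul _ hmeasIphi]
    exact lintegral_mono hperT
  -- pull back to real integrals
  calc (1/12) * ∫ z : ℝ × ℝ, (if z.2 ≤ z.1 then z.1 - z.2 else 0) ∂(μ.prod μ)
      = (ENNReal.ofReal (1/12)
          * (∫⁻ z : ℝ × ℝ, ENNReal.ofReal (if z.2 ≤ z.1 then z.1 - z.2 else 0)
              ∂(μ.prod μ))).toReal := by
        rw [ENNReal.toReal_mul, ← hPhiof, ENNReal.toReal_ofReal (by norm_num),
          ENNReal.toReal_ofReal (integral_nonneg hPhinn)]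
    _ ≤ (∫⁻ z : ℝ × ℝ, ENNReal.ofReal
          ((if z.2 ≤ z.1 then z.1 - z.2 else 0) * (F z.1 - F z.2)^2) ∂(μ.prod μ)).toReal := by
        refine ENNReal.toReal_mono ?_ hkeyfull
        rw [← hGof]
        exact ENNReal.ofReal_ne_top
    _ = ∫ z : ℝ × ℝ, (if z.2 ≤ z.1 then z.1 - z.2 else 0) * (F z.1 - F z.2)^2 ∂(μ.prod μ) := by
        rw [← hGof, ENNReal.toReal_ofReal (integral_nonneg hGnn)]
end

section
/- Let F be uniform on [0,1] and G uniform on [a,b]. Under the broker's profit-maximizing mechanism (trade iff φ_F(v) ≥ φ_G(c), i.e., iff v − c ≥ (1−v) + (c−a), i.e., v − c ≥ (1−a)/2), the resulting gains-from-trade is at least half the first-best gains-from-trade: ∫∫ (v−c)·1{v − c ≥ (1−a)/2} dF(v) dG(c) ≥ (1/2)·∫∫ (v−c)·1{v ≥ c} dF(v) dG(c). -/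
open MeasureTheory Set Filter

noncomputable def mm (x : ℝ) : ℝ := max 0 (min 1 x)

lemma mm_of_nonpos {x : ℝ} (h : x ≤ 0) : mm x = 0 := by
  unfold mm
  rw [max_eq_left]
  exact le_trans (min_le_right _ _) h

lemma mm_of_mem {x : ℝ} (h0 : 0 ≤ x) (h1 : x ≤ 1) : mm x = x := by
  unfold mm
  rw [min_eq_right h1, max_eq_right h0]

lemma mm_of_ge {x : ℝ} (h : 1 ≤ x) : mm x = 1 := by
  unfold mm
  rw [min_eq_left h, max_eq_right (by norm_num)]

lemma integral_linear (c x y : ℝ) : ∫ v in x..y, (v - c) = (y^2 - x^2)/2 - c*(y-x) := by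
  rw [intervalIntegral.integral_sub intervalIntegral.intervalIntegrable_id
    (intervalIntegrable_const (c := c))]
  simp [integral_id]
  ring

lemma inner_int (c k : ℝ) :
    ∫ v in (0:ℝ)..1, (if k ≤ v then v - c else 0)
      = (1 - (mm k)^2)/2 - c*(1 - mm k) := by
  rcases le_or_gt k 0 with hk | hk
  · rw [intervalIntegral.integral_congr (g := fun v => v - c)
      (fun v hv => by
        rw [uIcc_of_le (by norm_num : (0:ℝ) ≤ 1)] at hv
        exact if_pos (le_trans hk hv.1))]
    rw [integral_linear, mm_of_nonpos hk]
    ring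
  · have key : ∫ v in (0:ℝ)..1, (if k ≤ v then v - c else 0)
        = ∫ v in Icc k 1, (v - c) := by
      rw [intervalIntegral.integral_of_le (by norm_num : (0:ℝ) ≤ 1)]
      have h1 : (fun v => if k ≤ v then v - c else 0)
          = (Ici k).indicator (fun v => v - c) := by
        ext v; simp [Set.indicator_apply, mem_Ici]
      have h2 : Ioc (0:ℝ) 1 ∩ Ici k = Icc k 1 := by
        ext v
        simp only [mem_inter_iff, mem_Ici, mem_Ioc, mem_Icc]
        exact ⟨fun ⟨⟨_,a3⟩,a1⟩ => ⟨a1,a3⟩,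
          fun ⟨a1,a2⟩ => ⟨⟨lt_of_lt_of_le hk a1, a2⟩, a1⟩⟩
      rw [h1, setIntegral_indicator measurableSet_Ici, h2]
    rcases le_or_gt k 1 with hk1 | hk1
    · rw [key, integral_Icc_eq_integral_Ioc, ← intervalIntegral.integral_of_le hk1,
        integral_linear, mm_of_mem hk.le hk1]
      ring
    · have hz : volume (Icc k 1) = 0 := by
        simp only [Real.volume_Icc]
        rw [ENNReal.ofReal_eq_zero]
        linarith
      rw [key, Measure.restrict_eq_zero.mpr hz, integral_zero_measure, mm_of_ge hk1.le]
      ring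

noncomputable def fk (k c : ℝ) : ℝ := (1 - (mm (c+k))^2)/2 - c*(1 - mm (c+k))

noncomputable def Fk (k c : ℝ) : ℝ :=
  if c + k ≤ 0 then c/2 - c^2/2 + k^2/2 - 1/6
  else if c + k ≤ 1 then -((1-c-k)^3/6 + k*(1-c-k)^2/2)
  else 0

lemma cont_fk (k : ℝ) : Continuous (fk k) := by
  unfold fk mm
  fun_prop

lemma hg1 (k x : ℝ) : HasDerivAt (fun y : ℝ => y/2 - y^2/2 + k^2/2 - 1/6) (1/2 - x) x := by
  have h := (((hasDerivAt_id x).div_const 2).sub ((hasDerivAt_pow 2 x).div_const 2)).add_const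
    (k^2/2 - 1/6)
  convert h using 1
  · rfl
  · rfl
  · funext y; simp; ring
  · norm_num

lemma hg2 (k x : ℝ) : HasDerivAt (fun y : ℝ => -((1-y-k)^3/6 + k*(1-y-k)^2/2))
    ((1-x-k)^2/2 + k*(1-x-k)) x := by
  have hu : HasDerivAt (fun y : ℝ => 1 - y - k) (-1) x := by
    simpa using ((hasDerivAt_id x).const_sub 1).sub_const k
  have h := (((hu.pow 3).div_const 6).add (((hu.pow 2).div_const 2).const_mul k)).neg
  convert h using 1
  · rfl
  · rfl
  · funext y; simp only [Pi.neg_apply, Pi.add_apply, Pi.pow_apply]; ring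
  · push_cast; ring

lemma hasDeriv_Fk (k c : ℝ) : HasDerivAt (Fk k) (fk k c) c := by
  rcases lt_trichotomy (c + k) 0 with h0 | h0 | h0
  · -- Fk = g1 near c
    have hev : (Fk k) =ᶠ[nhds c] (fun y => y/2 - y^2/2 + k^2/2 - 1/6) := by
      filter_upwards [isOpen_Iio.eventually_mem (show c ∈ Iio (-k) by simp; linarith)] with x hx
      simp only [mem_Iio] at hx
      rw [Fk, if_pos (by linarith)]
    rw [show fk k c = 1/2 - c by rw [fk, mm_of_nonpos h0.le]; ring]
    exact (hg1 k c).congr_of_eventuallyEq hev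
  · -- junction c + k = 0
    have hval : fk k c = 1/2 - c := by rw [fk, mm_of_nonpos h0.le]; ring
    rw [hval]
    have hleft : HasDerivWithinAt (Fk k) (1/2 - c) (Iic c) c := by
      apply ((hg1 k c).hasDerivWithinAt).congr
      · intro x hx
        simp only [mem_Iic] at hx
        rw [Fk, if_pos (by linarith)]
      · rw [Fk, if_pos (by linarith)]
    have hright : HasDerivWithinAt (Fk k) (1/2 - c) (Ici c) c := by
      have hg2' : HasDerivWithinAt (fun y : ℝ => -((1-y-k)^3/6 + k*(1-y-k)^2/2)) (1/2 - c)
          (Ici c) c := by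
        have := (hg2 k c).hasDerivWithinAt (s := Ici c)
        convert this using 1
        · rfl
        · rfl
        have : c = -k := by linarith
        rw [this]; ring
      apply hg2'.congr_of_eventuallyEq _ ?_
      · have hmem : ∀ᶠ x in nhdsWithin c (Ici c), x ∈ Ici c := eventually_mem_nhdsWithin
        have hlt : ∀ᶠ x in nhdsWithin c (Ici c), x ∈ Iio (1-k) :=
          (isOpen_Iio.eventually_mem (show c ∈ Iio (1-k) by simp; linarith)).filter_mono
            nhdsWithin_le_nhds
        filter_upwards [hmem, hlt] with x hx1 hx2
        simp only [mem_Ici] at hx1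
        simp only [mem_Iio] at hx2
        rcases le_or_gt (x + k) 0 with hxk | hxk
        · have hxe : x = -k := by linarith
          rw [Fk, if_pos (by linarith)]
          rw [hxe]; ring
        · rw [Fk, if_neg (by linarith), if_pos (by linarith)]
      · rw [Fk, if_pos (by linarith)]
        have : c = -k := by linarith
        rw [this]; ring
    have := hleft.union hright
    rwa [Iic_union_Ici, hasDerivWithinAt_univ] at this
  · rcases lt_trichotomy (c + k) 1 with h1 | h1 | h1
    · -- middle open region
      have hval : fk k c = (1-c-k)^2/2 + k*(1-c-k) := by
        rw [fk, mm_of_mem h0.le h1.le]; ring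
      rw [hval]
      apply (hg2 k c).congr_of_eventuallyEq
      filter_upwards [isOpen_Ioo.eventually_mem
        (show c ∈ Ioo (-k) (1-k) by rw [mem_Ioo]; constructor <;> linarith)] with x hx
      obtain ⟨hx1, hx2⟩ := hx
      rw [Fk, if_neg (by linarith), if_pos (by linarith)]
    · -- junction c + k = 1
      have hval : fk k c = 0 := by rw [fk, mm_of_ge h1.ge]; ring
      rw [hval]
      have hleft : HasDerivWithinAt (Fk k) 0 (Iic c) c := by
        have hg2' : HasDerivWithinAt (fun y : ℝ => -((1-y-k)^3/6 + k*(1-y-k)^2/2)) 0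
            (Iic c) c := by
          have := (hg2 k c).hasDerivWithinAt (s := Iic c)
          convert this using 1
          · rfl
          · rfl
          have : c = 1 - k := by linarith
          rw [this]; ring
        apply hg2'.congr_of_eventuallyEq _ ?_
        · have hmem : ∀ᶠ x in nhdsWithin c (Iic c), x ∈ Iic c := eventually_mem_nhdsWithin
          have hlt : ∀ᶠ x in nhdsWithin c (Iic c), x ∈ Ioi (-k) :=
            (isOpen_Ioi.eventually_mem (show c ∈ Ioi (-k) by simp; linarith)).filter_mono
              nhdsWithin_le_nhds
          filter_upwards [hmem, hlt] with x hx1 hx2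
          simp only [mem_Iic] at hx1
          simp only [mem_Ioi] at hx2
          rw [Fk, if_neg (by linarith), if_pos (by linarith)]
        · rw [Fk, if_neg (by linarith), if_pos (by linarith)]
      have hright : HasDerivWithinAt (Fk k) 0 (Ici c) c := by
        apply (hasDerivWithinAt_const c (Ici c) 0).congr
        · intro x hx
          simp only [mem_Ici] at hx
          rcases le_or_gt (x + k) 1 with hxk | hxk
          · have hxe : x = 1 - k := by linarith
            rw [Fk, if_neg (by linarith), if_pos (by linarith), hxe]; ring
          · rw [Fk, if_neg (by linarith), if_neg (by linarith)]
        · rw [Fk, if_neg (by linarith), if_pos (by linarith)]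
          have : c = 1 - k := by linarith
          rw [this]; ring
      have := hleft.union hright
      rwa [Iic_union_Ici, hasDerivWithinAt_univ] at this
    · -- right region
      have hval : fk k c = 0 := by rw [fk, mm_of_ge h1.le]; ring
      rw [hval]
      apply (hasDerivAt_const c (0:ℝ)).congr_of_eventuallyEq
      filter_upwards [isOpen_Ioi.eventually_mem (show c ∈ Ioi (1-k) by simp; linarith)] with x hx
      simp only [mem_Ioi] at hx
      rw [Fk, if_neg (by linarith), if_neg (by linarith)]

lemma master (k x y : ℝ) :
    ∫ c in x..y, ((1 - (mm (c+k))^2)/2 - c*(1 - mm (c+k))) = Fk k y - Fk k x :=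
  intervalIntegral.integral_eq_sub_of_hasDerivAt (fun c _ => hasDeriv_Fk k c)
    ((cont_fk k).intervalIntegrable _ _)

lemma Fk_lin {k c : ℝ} (h : c + k ≤ 0) : Fk k c = c/2 - c^2/2 + k^2/2 - 1/6 := by
  rw [Fk, if_pos h]

lemma Fk_mid {k c : ℝ} (h0 : 0 ≤ c + k) (h1 : c + k ≤ 1) :
    Fk k c = -((1-c-k)^3/6 + k*(1-c-k)^2/2) := by
  rw [Fk]
  rcases le_or_gt (c + k) 0 with h | h
  · have hc : c = -k := by linarith
    rw [if_pos h, hc]; ring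
  · rw [if_neg (not_le.2 h), if_pos h1]

lemma Fk_top {k c : ℝ} (h : 1 ≤ c + k) : Fk k c = 0 := by
  rw [Fk, if_neg (by intro hh; linarith)]
  rcases le_or_gt (c + k) 1 with h1 | h1
  · have hc : c = 1 - k := by linarith
    rw [if_pos h1, hc]; ring
  · rw [if_neg (not_le.2 h1)]

set_option maxHeartbeats 1000000 in
lemma key_ineq (a b : ℝ) (hab : a < b) :
    Fk 0 b - Fk 0 a ≤ 2 * (Fk ((1-a)/2) b - Fk ((1-a)/2) a) := by
  rcases le_or_gt 1 a with ha1 | ha1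
  · rw [Fk_top (show (1:ℝ) ≤ b + 0 by linarith), Fk_top (show (1:ℝ) ≤ a + 0 by linarith),
      Fk_top (show (1:ℝ) ≤ b + (1-a)/2 by linarith),
      Fk_top (show (1:ℝ) ≤ a + (1-a)/2 by linarith)]
    norm_num
  · rcases le_or_gt b ((a-1)/2) with hb1 | hb1
    · -- case 1
      rw [Fk_lin (show b + 0 ≤ 0 by linarith), Fk_lin (show a + 0 ≤ 0 by linarith),
        Fk_lin (show b + (1-a)/2 ≤ 0 by linarith), Fk_lin (show a + (1-a)/2 ≤ 0 by linarith)]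
      nlinarith [mul_pos (sub_pos.2 hab) (show (0:ℝ) < 1 - a - b by linarith)]
    · rcases le_or_gt b ((1+a)/2) with hb2 | hb2
      · rcases le_or_gt a (-1) with ha2 | ha2
        · -- case 2
          rw [Fk_lin (show b + 0 ≤ 0 by linarith), Fk_lin (show a + 0 ≤ 0 by linarith),
            Fk_mid (show 0 ≤ b + (1-a)/2 by linarith) (show b + (1-a)/2 ≤ 1 by linarith),
            Fk_lin (show a + (1-a)/2 ≤ 0 by linarith)]
          nlinarith [mul_nonneg (show (0:ℝ) ≤ 2*b-a+1 by linarith)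
              (show (0:ℝ) ≤ 1+a-2*b by linarith),
            mul_nonneg (mul_nonneg (show (0:ℝ) ≤ 2*b-a+1 by linarith)
              (show (0:ℝ) ≤ 2*b-a+1 by linarith)) (show (0:ℝ) ≤ 2*b-a+1 by linarith),
            mul_nonneg (mul_nonneg (show (0:ℝ) ≤ -1-a by linarith)
              (show (0:ℝ) ≤ 2*b-a+1 by linarith)) (show (0:ℝ) ≤ 1+a-2*b by linarith),
            sq_nonneg (1+a)]
        · rcases le_or_gt b 0 with hb3 | hb3
          · -- case 3
            rw [Fk_lin (show b + 0 ≤ 0 by linarith), Fk_lin (show a + 0 ≤ 0 by linarith),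
              Fk_mid (show 0 ≤ b + (1-a)/2 by linarith) (show b + (1-a)/2 ≤ 1 by linarith),
              Fk_mid (show 0 ≤ a + (1-a)/2 by linarith) (show a + (1-a)/2 ≤ 1 by linarith)]
            nlinarith [mul_nonneg (show (0:ℝ) ≤ -b by linarith) (show (0:ℝ) ≤ b-a by linarith),
              mul_nonneg (mul_nonneg (show (0:ℝ) ≤ -b by linarith)
                (show (0:ℝ) ≤ b-a by linarith)) (show (0:ℝ) ≤ b-a by linarith),
              mul_nonneg (mul_nonneg (show (0:ℝ) ≤ -b by linarith)
                (show (0:ℝ) ≤ -b by linarith)) (show (0:ℝ) ≤ b-a by linarith),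
              mul_nonneg (mul_nonneg (show (0:ℝ) ≤ b-a by linarith)
                (show (0:ℝ) ≤ b-a by linarith)) (show (0:ℝ) ≤ b-a by linarith)]
          · rcases le_or_gt a 0 with ha3 | ha3
            · -- case 5
              rw [Fk_mid (show 0 ≤ b + 0 by linarith) (show b + 0 ≤ 1 by linarith),
                Fk_lin (show a + 0 ≤ 0 by linarith),
                Fk_mid (show 0 ≤ b + (1-a)/2 by linarith) (show b + (1-a)/2 ≤ 1 by linarith),
                Fk_mid (show 0 ≤ a + (1-a)/2 by linarith) (show a + (1-a)/2 ≤ 1 by linarith)]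
              nlinarith [mul_nonneg (show (0:ℝ) ≤ b by linarith)
                  (show (0:ℝ) ≤ 1+a-2*b by linarith),
                mul_nonneg (show (0:ℝ) ≤ -a by linarith) (show (0:ℝ) ≤ 1+a-2*b by linarith),
                mul_nonneg (show (0:ℝ) ≤ b by linarith) (show (0:ℝ) ≤ -a by linarith),
                mul_nonneg (sq_nonneg a) (show (0:ℝ) ≤ 1-b by linarith),
                mul_nonneg (mul_nonneg (show (0:ℝ) ≤ b by linarith)
                  (show (0:ℝ) ≤ b by linarith)) (show (0:ℝ) ≤ b by linarith),
                mul_nonneg (mul_nonneg (show (0:ℝ) ≤ -a by linarith)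
                  (show (0:ℝ) ≤ -a by linarith)) (show (0:ℝ) ≤ -a by linarith)]
            · -- case 8
              rw [Fk_mid (show 0 ≤ b + 0 by linarith) (show b + 0 ≤ 1 by linarith),
                Fk_mid (show 0 ≤ a + 0 by linarith) (show a + 0 ≤ 1 by linarith),
                Fk_mid (show 0 ≤ b + (1-a)/2 by linarith) (show b + (1-a)/2 ≤ 1 by linarith),
                Fk_mid (show 0 ≤ a + (1-a)/2 by linarith) (show a + (1-a)/2 ≤ 1 by linarith)]
              nlinarith [mul_nonneg (mul_nonneg (show (0:ℝ) ≤ b-a by linarith)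
                  (show (0:ℝ) ≤ b-a by linarith)) (show (0:ℝ) ≤ b-a by linarith),
                mul_nonneg (mul_nonneg (show (0:ℝ) ≤ b-a by linarith)
                  (show (0:ℝ) ≤ b-a by linarith)) (show (0:ℝ) ≤ 1+a-2*b by linarith),
                mul_nonneg (mul_nonneg (show (0:ℝ) ≤ b-a by linarith)
                  (show (0:ℝ) ≤ 1+a-2*b by linarith)) (show (0:ℝ) ≤ 1+a-2*b by linarith)]
      · rcases le_or_gt a (-1) with ha2 | ha2
        · rcases le_or_gt b 0 with hb3 | hb3
          · -- case 4
            rw [Fk_lin (show b + 0 ≤ 0 by linarith), Fk_lin (show a + 0 ≤ 0 by linarith),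
              Fk_top (show (1:ℝ) ≤ b + (1-a)/2 by linarith),
              Fk_lin (show a + (1-a)/2 ≤ 0 by linarith)]
            nlinarith [sq_nonneg a, sq_nonneg b]
          · rcases le_or_gt b 1 with hb4 | hb4
            · -- case 6
              rw [Fk_mid (show 0 ≤ b + 0 by linarith) (show b + 0 ≤ 1 by linarith),
                Fk_lin (show a + 0 ≤ 0 by linarith),
                Fk_top (show (1:ℝ) ≤ b + (1-a)/2 by linarith),
                Fk_lin (show a + (1-a)/2 ≤ 0 by linarith)]
              nlinarith [mul_nonneg (sq_nonneg (1-b)) (show (0:ℝ) ≤ 1-b by linarith),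
                sq_nonneg (1+a)]
            · -- case 10
              rw [Fk_top (show (1:ℝ) ≤ b + 0 by linarith), Fk_lin (show a + 0 ≤ 0 by linarith),
                Fk_top (show (1:ℝ) ≤ b + (1-a)/2 by linarith),
                Fk_lin (show a + (1-a)/2 ≤ 0 by linarith)]
              nlinarith [sq_nonneg (1+a)]
        · rcases le_or_gt a 0 with ha3 | ha3
          · rcases le_or_gt b 1 with hb4 | hb4
            · -- case 7
              rw [Fk_mid (show 0 ≤ b + 0 by linarith) (show b + 0 ≤ 1 by linarith),
                Fk_lin (show a + 0 ≤ 0 by linarith),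
                Fk_top (show (1:ℝ) ≤ b + (1-a)/2 by linarith),
                Fk_mid (show 0 ≤ a + (1-a)/2 by linarith) (show a + (1-a)/2 ≤ 1 by linarith)]
              nlinarith [mul_nonneg (sq_nonneg a) (show (0:ℝ) ≤ -a by linarith),
                mul_nonneg (sq_nonneg (1-b)) (show (0:ℝ) ≤ 1-b by linarith)]
            · -- case 11
              rw [Fk_top (show (1:ℝ) ≤ b + 0 by linarith), Fk_lin (show a + 0 ≤ 0 by linarith),
                Fk_top (show (1:ℝ) ≤ b + (1-a)/2 by linarith),
                Fk_mid (show 0 ≤ a + (1-a)/2 by linarith) (show a + (1-a)/2 ≤ 1 by linarith)]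
              nlinarith [mul_nonneg (sq_nonneg a) (show (0:ℝ) ≤ -a by linarith)]
          · rcases le_or_gt b 1 with hb4 | hb4
            · -- case 9
              rw [Fk_mid (show 0 ≤ b + 0 by linarith) (show b + 0 ≤ 1 by linarith),
                Fk_mid (show 0 ≤ a + 0 by linarith) (show a + 0 ≤ 1 by linarith),
                Fk_top (show (1:ℝ) ≤ b + (1-a)/2 by linarith),
                Fk_mid (show 0 ≤ a + (1-a)/2 by linarith) (show a + (1-a)/2 ≤ 1 by linarith)]
              nlinarith [mul_nonneg (sq_nonneg (1-b)) (show (0:ℝ) ≤ 1-b by linarith)]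
            · -- case 12 (equality)
              rw [Fk_top (show (1:ℝ) ≤ b + 0 by linarith),
                Fk_mid (show 0 ≤ a + 0 by linarith) (show a + 0 ≤ 1 by linarith),
                Fk_top (show (1:ℝ) ≤ b + (1-a)/2 by linarith),
                Fk_mid (show 0 ≤ a + (1-a)/2 by linarith) (show a + (1-a)/2 ≤ 1 by linarith)]
              nlinarith []

theorem stmt13 (a b : ℝ) (hab : a < b) :
    (1/(b-a)) * (∫ c in a..b, ∫ v in (0:ℝ)..1,
        (if (1-a)/2 ≤ v - c then v - c else 0))
      ≥ (1/2) * ((1/(b-a)) * ∫ c in a..b, ∫ v in (0:ℝ)..1,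
        (if c ≤ v then v - c else 0)) := by
  have hA : (∫ c in a..b, ∫ v in (0:ℝ)..1,
      (if (1-a)/2 ≤ v - c then v - c else 0))
      = Fk ((1-a)/2) b - Fk ((1-a)/2) a := by
    rw [← master ((1-a)/2) a b]
    apply intervalIntegral.integral_congr
    intro c _
    dsimp only
    have h1 : (∫ v in (0:ℝ)..1, (if (1-a)/2 ≤ v - c then v - c else 0))
        = ∫ v in (0:ℝ)..1, (if c + (1-a)/2 ≤ v then v - c else 0) := by
      apply intervalIntegral.integral_congr
      intro v _
      dsimp only
      rcases le_or_gt ((1-a)/2) (v - c) with h | h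
      · rw [if_pos h, if_pos (by linarith)]
      · rw [if_neg (not_le.2 h), if_neg (by intro hh; exact absurd (by linarith : (1-a)/2 ≤ v - c) (not_le.2 h))]
    rw [h1, inner_int c (c + (1-a)/2)]
  have hB : (∫ c in a..b, ∫ v in (0:ℝ)..1, (if c ≤ v then v - c else 0))
      = Fk 0 b - Fk 0 a := by
    rw [← master 0 a b]
    apply intervalIntegral.integral_congr
    intro c _
    dsimp only
    rw [add_zero, inner_int c c]
  rw [hA, hB, ge_iff_le]
  have hba : (0:ℝ) < 1/(b-a) := by
    apply div_pos one_pos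
    linarith
  have hk := key_ineq a b hab
  nlinarith [mul_nonneg hba.le (by linarith :
    (0:ℝ) ≤ 2 * (Fk ((1-a)/2) b - Fk ((1-a)/2) a) - (Fk 0 b - Fk 0 a))]
end

section
/- Let F be uniform on [0,1] and G uniform on [1/2, 3/2]. Then the broker's optimal mechanism (trade iff v − c ≥ 1/4) achieves gains-from-trade exactly half the first-best: ∫_{1/2}^{3/2} ∫_0^1 (v−c)·1{v − c ≥ 1/4} dv dc = (1/2)·∫_{1/2}^{3/2} ∫_0^1 (v−c)·1{v ≥ c} dv dc. -/
open MeasureTheory Set Filter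

lemma aux_intble (c t a b : ℝ) :
    IntervalIntegrable (fun v => if t ≤ v then v - c else 0) volume a b := by
  have h : (fun v => if t ≤ v then v - c else 0) = (Set.Ici t).indicator (fun v => v - c) := by
    funext v; simp [Set.indicator, Set.mem_Ici]
  rw [h, intervalIntegrable_iff]
  exact ((continuous_id.sub continuous_const).integrableOn_uIoc).indicator measurableSet_Ici

lemma aux_zero_part (c t a b : ℝ) (hab : a ≤ b) (hb : b ≤ t) :
    (∫ v in a..b, (if t ≤ v then v - c else 0)) = 0 := by
  have hne : ∀ᵐ v : ℝ ∂volume, v ≠ t := by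
    have : (volume : Measure ℝ) {t} = 0 := Real.volume_singleton
    exact MeasureTheory.measure_mono_null (by intro x hx; simpa using hx) this
  rw [intervalIntegral.integral_congr_ae (g := fun _ => (0:ℝ)) ?_]
  · simp
  · filter_upwards [hne] with v hv hmem
    rw [Set.uIoc_of_le hab] at hmem
    have hvt : v ≤ t := le_trans hmem.2 hb
    have : v < t := lt_of_le_of_ne hvt hv
    rw [if_neg (by linarith)]

lemma aux_pos_part (c t b : ℝ) (htb : t ≤ b) :
    (∫ v in t..b, (if t ≤ v then v - c else 0)) = (b - c)^2/2 - (t - c)^2/2 := by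
  rw [intervalIntegral.integral_congr (g := fun v => v - c) ?_]
  · rw [intervalIntegral.integral_sub (Continuous.intervalIntegrable continuous_id' t b)
      intervalIntegrable_const, integral_id, intervalIntegral.integral_const, smul_eq_mul]
    ring
  · intro v hv
    rw [Set.uIcc_of_le htb] at hv
    simp only [if_pos hv.1]

lemma inner_general (c t : ℝ) (h0 : 0 ≤ t) (h1 : t ≤ 1) :
    (∫ v in (0:ℝ)..1, (if t ≤ v then v - c else 0)) = (1 - c)^2/2 - (t - c)^2/2 := by
  rw [← intervalIntegral.integral_add_adjacent_intervals (b := t)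
    (aux_intble c t 0 t) (aux_intble c t t 1),
    aux_zero_part c t 0 t h0 le_rfl, aux_pos_part c t 1 h1, zero_add]

lemma int_poly (k a b : ℝ) : (∫ c in a..b, ((1-c)^2/2 - k)) = ((1-a)^3 - (1-b)^3)/6 - k*(b-a) := by
  have hd : ∀ x ∈ Set.uIcc a b,
      HasDerivAt (fun c => -(1-c)^3/6 - k*c) ((1-x)^2/2 - k) x := by
    intro x _
    have h1 : HasDerivAt (fun c : ℝ => (1-c)^3) (3*(1-x)^2 * (-1)) x := by
      simpa using (((hasDerivAt_id x).const_sub 1).fun_pow 3)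
    have h : HasDerivAt (fun c : ℝ => -((1 - c) ^ 3 / 6) - k * id c) (-(3 * (1 - x) ^ 2 * -1 / 6) - k * 1) x :=
      ((h1.div_const 6).fun_neg).fun_sub ((hasDerivAt_id x).const_mul k)
    convert h using 1
    · funext y; simp only [id]; ring
    · ring
  rw [intervalIntegral.integral_eq_sub_of_hasDerivAt hd
    ((by fun_prop : Continuous fun c : ℝ => (1-c)^2/2 - k).intervalIntegrable a b)]
  ring

lemma lhs_if (c v : ℝ) :
    (if (1/4:ℝ) ≤ v - c then v - c else 0) = (if c + 1/4 ≤ v then v - c else 0) := by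
  apply if_congr _ rfl rfl
  constructor <;> intro <;> linarith

theorem stmt14 :
    (∫ c in (1/2:ℝ)..(3/2), ∫ v in (0:ℝ)..1,
        (if (1/4:ℝ) ≤ v - c then v - c else 0))
      = (1/2) * ∫ c in (1/2:ℝ)..(3/2), ∫ v in (0:ℝ)..1,
        (if c ≤ v then v - c else 0) := by
  -- rewrite inner integrand of LHS
  have hF : ∀ c : ℝ, (∫ v in (0:ℝ)..1, (if (1/4:ℝ) ≤ v - c then v - c else 0))
      = ∫ v in (0:ℝ)..1, (if c + 1/4 ≤ v then v - c else 0) := by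
    intro c
    exact intervalIntegral.integral_congr (fun v _ => lhs_if c v)
  -- closed forms for the inner integrals
  have hF1 : ∀ c ∈ Set.Icc (1/2:ℝ) (3/4),
      (∫ v in (0:ℝ)..1, (if (1/4:ℝ) ≤ v - c then v - c else 0))
        = (1-c)^2/2 - 1/32 := by
    intro c hc
    rw [hF c, inner_general c (c + 1/4) (by linarith [hc.1]) (by linarith [hc.2])]
    ring
  have hF2 : ∀ c ∈ Set.Icc (3/4:ℝ) (3/2),
      (∫ v in (0:ℝ)..1, (if (1/4:ℝ) ≤ v - c then v - c else 0)) = 0 := by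
    intro c hc
    rw [hF c]
    exact aux_zero_part c (c + 1/4) 0 1 (by norm_num) (by linarith [hc.1])
  have hG1 : ∀ c ∈ Set.Icc (1/2:ℝ) 1,
      (∫ v in (0:ℝ)..1, (if c ≤ v then v - c else 0)) = (1-c)^2/2 - 0 := by
    intro c hc
    rw [inner_general c c (by linarith [hc.1]) hc.2]
    ring
  have hG2 : ∀ c ∈ Set.Icc (1:ℝ) (3/2),
      (∫ v in (0:ℝ)..1, (if c ≤ v then v - c else 0)) = 0 := by
    intro c hc
    exact aux_zero_part c c 0 1 (by norm_num) hc.1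
  -- integrability of the pieces
  have hI1 : IntervalIntegrable (fun c => ∫ v in (0:ℝ)..1,
      (if (1/4:ℝ) ≤ v - c then v - c else 0)) volume (1/2) (3/4) := by
    rw [intervalIntegrable_iff]
    refine ((by fun_prop : Continuous fun c : ℝ => (1-c)^2/2 - 1/32).integrableOn_uIoc).congr_fun
      (fun c hc => ?_) measurableSet_uIoc
    rw [Set.uIoc_of_le (by norm_num : (1/2:ℝ) ≤ 3/4)] at hc
    exact (hF1 c ⟨hc.1.le, hc.2⟩).symm
  have hI2 : IntervalIntegrable (fun c => ∫ v in (0:ℝ)..1,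
      (if (1/4:ℝ) ≤ v - c then v - c else 0)) volume (3/4) (3/2) := by
    rw [intervalIntegrable_iff]
    refine (integrableOn_zero).congr_fun (fun c hc => ?_) measurableSet_uIoc
    rw [Set.uIoc_of_le (by norm_num : (3/4:ℝ) ≤ 3/2)] at hc
    exact (hF2 c ⟨hc.1.le, hc.2⟩).symm
  have hJ1 : IntervalIntegrable (fun c => ∫ v in (0:ℝ)..1,
      (if c ≤ v then v - c else 0)) volume (1/2) 1 := by
    rw [intervalIntegrable_iff]
    refine ((by fun_prop : Continuous fun c : ℝ => (1-c)^2/2 - 0).integrableOn_uIoc).congr_fun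
      (fun c hc => ?_) measurableSet_uIoc
    rw [Set.uIoc_of_le (by norm_num : (1/2:ℝ) ≤ 1)] at hc
    exact (hG1 c ⟨hc.1.le, hc.2⟩).symm
  have hJ2 : IntervalIntegrable (fun c => ∫ v in (0:ℝ)..1,
      (if c ≤ v then v - c else 0)) volume 1 (3/2) := by
    rw [intervalIntegrable_iff]
    refine (integrableOn_zero).congr_fun (fun c hc => ?_) measurableSet_uIoc
    rw [Set.uIoc_of_le (by norm_num : (1:ℝ) ≤ 3/2)] at hc
    exact (hG2 c ⟨hc.1.le, hc.2⟩).symm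
  rw [← intervalIntegral.integral_add_adjacent_intervals hI1 hI2,
      ← intervalIntegral.integral_add_adjacent_intervals hJ1 hJ2,
      intervalIntegral.integral_congr (g := fun c => (1-c)^2/2 - 1/32)
        (fun c hc => hF1 c (by rwa [Set.uIcc_of_le (by norm_num : (1/2:ℝ) ≤ 3/4)] at hc)),
      intervalIntegral.integral_congr (g := fun _ => (0:ℝ))
        (fun c hc => hF2 c (by rwa [Set.uIcc_of_le (by norm_num : (3/4:ℝ) ≤ 3/2)] at hc)),
      intervalIntegral.integral_congr (g := fun c => (1-c)^2/2 - 0)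
        (fun c hc => hG1 c (by rwa [Set.uIcc_of_le (by norm_num : (1/2:ℝ) ≤ 1)] at hc)),
      intervalIntegral.integral_congr (g := fun _ => (0:ℝ))
        (fun c hc => hG2 c (by rwa [Set.uIcc_of_le (by norm_num : (1:ℝ) ≤ 3/2)] at hc)),
      int_poly, int_poly]
  norm_num
end

section
/- Let F(v) = 1 − a/v for a ≤ v ≤ b and F(v) = (1 − a/b) + (a/b²)(v − b) for b < v ≤ 2b (with b > a ≥ 1), and let G be uniform on [0,1]. Define GFT(b) = ∫∫ (v−c)·1{v − c ≥ (1−F(v))/F'(v) + c} dF(v) dG(c) and FB(b) = ∫∫ (v−c)·1{v ≥ c} dF(v) dG(c). Then GFT(b) ≤ a(3b−1)/(2b) and FB(b) ≥ a·(ln(b/a) + 1/(2b) − 1/(2a)) + a(3b−1)/(2b); consequently GFT(b)/FB(b) → 0 as b → ∞. -/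
open MeasureTheory Set Filter

lemma quadInt (c2 c1 c0 p q : ℝ) :
    ∫ v in p..q, (c2*v^2 + c1*v + c0) =
      (c2*q^3/3 + c1*q^2/2 + c0*q) - (c2*p^3/3 + c1*p^2/2 + c0*p) := by
  have hderiv : ∀ x ∈ Set.uIcc p q,
      HasDerivAt (fun y => c2*y^3/3 + c1*y^2/2 + c0*y) (c2*x^2 + c1*x + c0) x := by
    intro x _
    have h3 : HasDerivAt (fun y : ℝ => y^3) (3*x^2) x := by simpa using hasDerivAt_pow 3 x
    have h2 : HasDerivAt (fun y : ℝ => y^2) (2*x) x := by simpa using hasDerivAt_pow 2 x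
    have h1 : HasDerivAt (fun y : ℝ => y) 1 x := hasDerivAt_id' x
    have h := (((h3.const_mul c2).div_const 3).add ((h2.const_mul c1).div_const 2)).add
      (h1.const_mul c0)
    refine h.congr_deriv ?_
    ring
  rw [intervalIntegral.integral_eq_sub_of_hasDerivAt hderiv
    ((by fun_prop : Continuous fun y : ℝ => c2*y^2 + c1*y + c0).intervalIntegrable _ _)]

lemma quadInt' (c2 c1 c0 p q : ℝ) (f : ℝ → ℝ) (hf : ∀ x, f x = c2*x^2 + c1*x + c0) :
    ∫ v in p..q, f v =
      (c2*q^3/3 + c1*q^2/2 + c0*q) - (c2*p^3/3 + c1*p^2/2 + c0*p) := by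
  rw [show f = fun x => c2*x^2 + c1*x + c0 from funext hf]
  exact quadInt c2 c1 c0 p q

lemma congrII (p q : ℝ) (f g : ℝ → ℝ) (heq : Set.EqOn f g (Set.uIcc p q))
    (hf : IntervalIntegrable f volume p q) : IntervalIntegrable g volume p q := by
  apply hf.congr
  exact fun x hx => heq (Set.uIoc_subset_uIcc hx)

set_option maxHeartbeats 2000000 in
theorem stmt17 (a : ℝ) (ha : 1 ≤ a)
    (F : ℝ → ℝ → ℝ)
    (hF : ∀ b v, F b v = if v ≤ b then 1 - a/v else (1 - a/b) + a/b^2 * (v - b))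
    (GFT FB : ℝ → ℝ)
    (hGFT : ∀ b, GFT b = ∫ v in a..(2*b), ∫ c in (0:ℝ)..1,
        (if (1 - F b v) / deriv (F b) v + c ≤ v - c then v - c else 0) * deriv (F b) v)
    (hFB : ∀ b, FB b = ∫ v in a..(2*b), ∫ c in (0:ℝ)..1,
        (if c ≤ v then v - c else 0) * deriv (F b) v) :
    (∀ b, a < b → GFT b ≤ a*(3*b - 1)/(2*b)) ∧
    (∀ b, a < b →
      a*(Real.log (b/a) + 1/(2*b) - 1/(2*a)) + a*(3*b - 1)/(2*b) ≤ FB b) ∧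
    Tendsto (fun b => GFT b / FB b) atTop (nhds 0) := by
  have ha0 : (0:ℝ) < a := lt_of_lt_of_le one_pos ha
  have hane : a ≠ 0 := ha0.ne'
  have hd1 : ∀ (b v : ℝ), 0 < v → v < b → deriv (F b) v = a / v^2 := by
    intro b v hv hvb
    have hev : F b =ᶠ[nhds v] fun x => 1 - a * x⁻¹ := by
      filter_upwards [Iio_mem_nhds hvb] with x hx
      rw [hF b x, if_pos (le_of_lt hx), div_eq_mul_inv]
    rw [hev.deriv_eq]
    have h1 : HasDerivAt (fun x : ℝ => 1 - a * x⁻¹) (a / v^2) v := by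
      have h := ((hasDerivAt_inv hv.ne').const_mul a).const_sub 1
      refine h.congr_deriv ?_
      ring
    exact h1.deriv
  have hd2 : ∀ (b v : ℝ), b < v → deriv (F b) v = a / b^2 := by
    intro b v hvb
    have hev : F b =ᶠ[nhds v] fun x => (1 - a/b) + a/b^2 * (x - b) := by
      filter_upwards [Ioi_mem_nhds hvb] with x hx
      rw [hF b x, if_neg (not_le.mpr hx)]
    rw [hev.deriv_eq]
    have h1 : HasDerivAt (fun x : ℝ => (1 - a/b) + a/b^2 * (x - b)) (a / b^2) v := by
      have h := (((hasDerivAt_id v).sub_const b).const_mul (a/b^2)).const_add (1 - a/b)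
      simpa using h
    exact h1.deriv
  have hae_ne : ∀ b : ℝ, ∀ᵐ v : ℝ, v ≠ b := by
    intro b
    rw [ae_iff]
    simp only [not_not, Set.setOf_eq_eq_singleton]
    exact measure_singleton b
  -- exact value of GFT
  have hGFTval : ∀ b : ℝ, a < b → GFT b = a/b^2 * (3*b^2/2 - b + 1/6) := by
    intro b hb
    have hb1 : (1:ℝ) < b := lt_of_le_of_lt ha hb
    have hb0 : (0:ℝ) < b := by linarith
    have hbne : b ≠ 0 := hb0.ne'
    set h : ℝ → ℝ := fun v => if v ≤ b then 0
      else a/b^2 * (if v ≤ b+1 then v*(v-b) - (v-b)^2/2 else v - 1/2) with hh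
    have step1 : GFT b = ∫ v in a..(2*b), h v := by
      rw [hGFT b]
      apply intervalIntegral.integral_congr_ae
      filter_upwards [hae_ne b] with v hvne hvI
      rw [Set.uIoc_of_le (by linarith : a ≤ 2*b)] at hvI
      rcases lt_or_gt_of_ne hvne with hlt | hgt
      · have hv0 : (0:ℝ) < v := lt_trans ha0 hvI.1
        have hvne0 : v ≠ 0 := hv0.ne'
        rw [hd1 b v hv0 hlt]
        have hFv : F b v = 1 - a/v := by rw [hF b v, if_pos hlt.le]
        have hr : (1 - F b v) / (a / v^2) = v := by
          rw [hFv]; field_simp; ring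
        rw [hr]
        simp only [hh, if_pos hlt.le]
        have hz : (∫ c in (0:ℝ)..1, (if v + c ≤ v - c then v - c else 0) * (a/v^2))
            = ∫ c in (0:ℝ)..1, (0:ℝ) := by
          apply intervalIntegral.integral_congr_ae
          filter_upwards with c hc
          rw [Set.uIoc_of_le (by norm_num : (0:ℝ) ≤ 1)] at hc
          rw [if_neg (by linarith [hc.1] : ¬ (v + c ≤ v - c)), zero_mul]
        rw [hz, intervalIntegral.integral_zero]
      · rw [hd2 b v hgt]
        have hFv : F b v = (1 - a/b) + a/b^2 * (v - b) := by
          rw [hF b v, if_neg (not_le.mpr hgt)]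
        have hr : (1 - F b v) / (a / b^2) = 2*b - v := by
          rw [hFv]; field_simp; ring
        rw [hr]
        simp only [hh, if_neg (not_le.mpr hgt)]
        have hcond : ∀ c : ℝ, (if 2*b - v + c ≤ v - c then v - c else 0)
            = (if c ≤ v - b then v - c else 0) := by
          intro c
          exact if_congr (by constructor <;> intro h' <;> linarith) rfl rfl
        simp only [hcond]
        rw [intervalIntegral.integral_mul_const]
        rcases le_or_gt v (b+1) with hle | hgt1
        · rw [if_pos hle]
          have hmem : v - b ∈ Set.Icc (0:ℝ) 1 := ⟨by linarith, by linarith⟩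
          have hind : (∫ c in (0:ℝ)..1, (if c ≤ v - b then v - c else 0))
              = ∫ c in (0:ℝ)..(v - b), (v - c) := by
            rw [← intervalIntegral.integral_indicator hmem]
            apply intervalIntegral.integral_congr
            intro c _
            simp [Set.indicator_apply]
          rw [hind, quadInt' 0 (-1) v 0 (v-b) (fun c => v - c) (fun x => by ring)]
          ring
        · rw [if_neg (not_le.mpr hgt1)]
          have hcc : (∫ c in (0:ℝ)..1, (if c ≤ v - b then v - c else 0))
              = ∫ c in (0:ℝ)..1, (v - c) := by
            apply intervalIntegral.integral_congr
            intro c hc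
            rw [Set.uIcc_of_le (by norm_num : (0:ℝ) ≤ 1)] at hc
            simp only [if_pos (show c ≤ v - b by linarith [hc.2])]
          rw [hcc, quadInt' 0 (-1) v 0 1 (fun c => v - c) (fun x => by ring)]
          ring
    have hEq1 : Set.EqOn h (fun _ => (0:ℝ)) (Set.uIcc a b) := by
      intro v hv
      rw [Set.uIcc_of_le hb.le] at hv
      simp only [hh, if_pos hv.2]
    have hEq2 : Set.EqOn h (fun v => (a/(2*b^2))*v^2 + 0*v + (-(a/2))) (Set.uIcc b (b+1)) := by
      intro v hv
      rw [Set.uIcc_of_le (by linarith : b ≤ b+1)] at hv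
      by_cases hvb : v ≤ b
      · have hveq : v = b := le_antisymm hvb hv.1
        subst hveq
        simp only [hh, if_pos le_rfl]
        field_simp
        ring
      · simp only [hh, if_neg hvb, if_pos hv.2]
        field_simp
        ring
    have hEq3 : Set.EqOn h (fun v => 0*v^2 + (a/b^2)*v + (-(a/(2*b^2))))
        (Set.uIcc (b+1) (2*b)) := by
      intro v hv
      rw [Set.uIcc_of_le (by linarith : b+1 ≤ 2*b)] at hv
      have hvb : ¬ v ≤ b := by push_neg; linarith [hv.1]
      by_cases hv1 : v ≤ b+1
      · have hveq : v = b+1 := le_antisymm hv1 hv.1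
        subst hveq
        simp only [hh, if_neg hvb, if_pos le_rfl]
        field_simp
        ring
      · simp only [hh, if_neg hvb, if_neg hv1]
        field_simp
        ring
    have hi1 : IntervalIntegrable h volume a b :=
      congrII a b _ h hEq1.symm intervalIntegrable_const
    have hi2 : IntervalIntegrable h volume b (b+1) :=
      congrII b (b+1) _ h hEq2.symm
        ((by fun_prop : Continuous fun v : ℝ => (a/(2*b^2))*v^2 + 0*v + (-(a/2))).intervalIntegrable _ _)
    have hi3 : IntervalIntegrable h volume (b+1) (2*b) :=
      congrII (b+1) (2*b) _ h hEq3.symm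
        ((by fun_prop : Continuous fun v : ℝ => 0*v^2 + (a/b^2)*v + (-(a/(2*b^2)))).intervalIntegrable _ _)
    rw [step1, ← intervalIntegral.integral_add_adjacent_intervals hi1 (hi2.trans hi3),
      ← intervalIntegral.integral_add_adjacent_intervals hi2 hi3,
      intervalIntegral.integral_congr hEq1,
      intervalIntegral.integral_congr hEq2,
      intervalIntegral.integral_congr hEq3,
      quadInt (a/(2*b^2)) 0 (-(a/2)) b (b+1),
      quadInt 0 (a/b^2) (-(a/(2*b^2))) (b+1) (2*b)]
    simp only [intervalIntegral.integral_const, smul_eq_mul, mul_zero]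
    field_simp
    ring
  -- exact value of FB
  have hFBval : ∀ b : ℝ, a < b →
      FB b = a*(Real.log (b/a) + 1/(2*b) - 1/(2*a)) + a*(3*b - 1)/(2*b) := by
    intro b hb
    have hb1 : (1:ℝ) < b := lt_of_le_of_lt ha hb
    have hb0 : (0:ℝ) < b := by linarith
    have hbne : b ≠ 0 := hb0.ne'
    set h : ℝ → ℝ := fun v => if v ≤ b then a/v^2 * (v - 1/2) else a/b^2 * (v - 1/2) with hh
    have hinner : ∀ (v D : ℝ), a < v →
        (∫ c in (0:ℝ)..1, (if c ≤ v then v - c else 0) * D) = (v - 1/2) * D := by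
      intro v D hva
      have hcc : (∫ c in (0:ℝ)..1, (if c ≤ v then v - c else 0) * D)
          = ∫ c in (0:ℝ)..1, (v - c) * D := by
        apply intervalIntegral.integral_congr
        intro c hc
        rw [Set.uIcc_of_le (by norm_num : (0:ℝ) ≤ 1)] at hc
        simp only [if_pos (show c ≤ v by linarith [hc.2])]
      rw [hcc, quadInt' 0 (-D) (v*D) 0 1 (fun c => (v - c)*D) (fun x => by ring)]
      ring
    have step1 : FB b = ∫ v in a..(2*b), h v := by
      rw [hFB b]
      apply intervalIntegral.integral_congr_ae
      filter_upwards [hae_ne b] with v hvne hvI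
      rw [Set.uIoc_of_le (by linarith : a ≤ 2*b)] at hvI
      have hva : a < v := hvI.1
      rcases lt_or_gt_of_ne hvne with hlt | hgt
      · rw [hd1 b v (by linarith) hlt, hinner v _ hva]
        simp only [hh, if_pos hlt.le]
        ring
      · rw [hd2 b v hgt, hinner v _ hva]
        simp only [hh, if_neg (not_le.mpr hgt)]
        ring
    have hEqA : Set.EqOn h (fun v => a/v^2 * (v - 1/2)) (Set.uIcc a b) := by
      intro v hv
      rw [Set.uIcc_of_le hb.le] at hv
      simp only [hh, if_pos hv.2]
    have hEqB : Set.EqOn h (fun v => 0*v^2 + (a/b^2)*v + (-(a/(2*b^2))))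
        (Set.uIcc b (2*b)) := by
      intro v hv
      rw [Set.uIcc_of_le (by linarith : b ≤ 2*b)] at hv
      by_cases hvb : v ≤ b
      · have hveq : v = b := le_antisymm hvb hv.1
        subst hveq
        simp only [hh, if_pos le_rfl]
        field_simp
        ring
      · simp only [hh, if_neg hvb]
        field_simp
        ring
    have hcontA : ContinuousOn (fun v : ℝ => a/v^2 * (v - 1/2)) (Set.uIcc a b) := by
      apply ContinuousOn.mul
      · apply ContinuousOn.div continuousOn_const (continuous_pow 2).continuousOn
        intro x hx
        rw [Set.uIcc_of_le hb.le] at hx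
        exact pow_ne_zero 2 (ne_of_gt (lt_of_lt_of_le ha0 hx.1))
      · exact (continuous_id.sub continuous_const).continuousOn
    have hiA' : IntervalIntegrable (fun v : ℝ => a/v^2 * (v - 1/2)) volume a b :=
      hcontA.intervalIntegrable
    have hiA : IntervalIntegrable h volume a b := congrII a b _ h hEqA.symm hiA'
    have hiB : IntervalIntegrable h volume b (2*b) :=
      congrII b (2*b) _ h hEqB.symm ((by fun_prop : Continuous fun v : ℝ => 0*v^2 + (a/b^2)*v + (-(a/(2*b^2)))).intervalIntegrable _ _)
    have hftc : ∀ x ∈ Set.uIcc a b, HasDerivAt (fun y : ℝ => a * Real.log y + (a/2) * y⁻¹)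
        (a/x^2 * (x - 1/2)) x := by
      intro x hx
      rw [Set.uIcc_of_le hb.le] at hx
      have hx0 : (0:ℝ) < x := lt_of_lt_of_le ha0 hx.1
      have h1 := (Real.hasDerivAt_log hx0.ne').const_mul a
      have h2 := (hasDerivAt_inv hx0.ne').const_mul (a/2)
      have h3 := h1.add h2
      refine h3.congr_deriv ?_
      field_simp
      ring
    have hval1 : (∫ v in a..b, a/v^2 * (v - 1/2))
        = (a * Real.log b + (a/2) * b⁻¹) - (a * Real.log a + (a/2) * a⁻¹) :=
      intervalIntegral.integral_eq_sub_of_hasDerivAt hftc hiA'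
    rw [step1, ← intervalIntegral.integral_add_adjacent_intervals hiA hiB,
      intervalIntegral.integral_congr hEqA,
      intervalIntegral.integral_congr hEqB, hval1,
      quadInt 0 (a/b^2) (-(a/(2*b^2))) b (2*b),
      Real.log_div hbne hane]
    field_simp
    ring
  refine ⟨?_, ?_, ?_⟩
  · intro b hb
    have hb1 : (1:ℝ) < b := lt_of_le_of_lt ha hb
    have hb0 : (0:ℝ) < b := by linarith
    rw [hGFTval b hb, div_mul_eq_mul_div, div_le_div_iff₀ (by positivity) (by positivity)]
    nlinarith [mul_pos (mul_pos ha0 hb0) (show (0:ℝ) < b - 1/3 by linarith)]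
  · intro b hb
    exact (hFBval b hb).ge
  · have hFBeq : FB =ᶠ[atTop] fun b => a * Real.log b + (3*a/2 - 1/2 - a * Real.log a) := by
      filter_upwards [eventually_gt_atTop a] with b hb
      have hb1 : (1:ℝ) < b := lt_of_le_of_lt ha hb
      have hb0 : (0:ℝ) < b := by linarith
      have hbne : b ≠ 0 := hb0.ne'
      rw [hFBval b hb, Real.log_div hbne hane]
      field_simp
      ring
    have hFBtop : Tendsto FB atTop atTop := by
      apply Filter.Tendsto.congr' hFBeq.symm
      exact tendsto_atTop_add_const_right _ _
        (Real.tendsto_log_atTop.const_mul_atTop ha0)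
    have hFBpos : ∀ᶠ b in atTop, 0 < FB b := hFBtop.eventually_gt_atTop 0
    have hGFTnn : ∀ᶠ b in atTop, 0 ≤ GFT b := by
      filter_upwards [eventually_gt_atTop a] with b hb
      have hb1 : (1:ℝ) < b := lt_of_le_of_lt ha hb
      have hb0 : (0:ℝ) < b := by linarith
      rw [hGFTval b hb]
      have hpos : (0:ℝ) ≤ 3*b^2/2 - b + 1/6 := by nlinarith
      positivity
    have hGFTle : ∀ᶠ b in atTop, GFT b ≤ 3*a/2 := by
      filter_upwards [eventually_gt_atTop a] with b hb
      have hb1 : (1:ℝ) < b := lt_of_le_of_lt ha hb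
      have hb0 : (0:ℝ) < b := by linarith
      rw [hGFTval b hb, div_mul_eq_mul_div, div_le_iff₀ (by positivity)]
      nlinarith [mul_pos ha0 (show (0:ℝ) < b - 1/6 by linarith)]
    have htop : Tendsto (fun b : ℝ => (3*a/2) / FB b) atTop (nhds 0) :=
      tendsto_const_nhds.div_atTop hFBtop
    refine squeeze_zero' ?_ ?_ htop
    · filter_upwards [hGFTnn, hFBpos] with b h1 h2
      exact div_nonneg h1 h2.le
    · filter_upwards [hGFTle, hFBpos] with b h1 h2
      exact (div_le_div_iff_of_pos_right h2).mpr h1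
end

section
/- For b > a > 0, let F(v) = 1 − a/v on [a,b] extended linearly by F(v) = (1 − a/b) + (a/b²)(v − b) on (b, 2b], and let the seller's value be deterministically c = a (public seller). The profit-maximizing broker's mechanism trades iff v − a ≥ (1 − F(v))/F'(v), and its gains-from-trade equals 3a(a − 2b)²/(8b²), while the first-best gains-from-trade equals a(ln(b/a) + a/b − 1) + (3a/2 − a²/b). Consequently the ratio GFT/FB tends to 0 as b → ∞. -/
open MeasureTheory Set Filter

private lemma aux_deriv_lt (a b : ℝ) (F : ℝ → ℝ → ℝ)
    (hF : ∀ b v, F b v = if v ≤ b then 1 - a/v else (1 - a/b) + a/b^2 * (v - b))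
    {v : ℝ} (hv0 : 0 < v) (hvb : v < b) : deriv (F b) v = a / v ^ 2 := by
  have hev : F b =ᶠ[nhds v] fun x => 1 - a / x := by
    filter_upwards [Iio_mem_nhds hvb] with x hx
    rw [hF, if_pos (le_of_lt hx)]
  rw [hev.deriv_eq]
  have h1 : HasDerivAt (fun x : ℝ => 1 - a * x⁻¹) (-(a * -(v ^ 2)⁻¹)) v :=
    ((hasDerivAt_inv hv0.ne').const_mul a).const_sub 1
  have h2 : HasDerivAt (fun x : ℝ => 1 - a / x) (a / v ^ 2) v := by
    have he : (fun x : ℝ => 1 - a / x) = fun x : ℝ => 1 - a * x⁻¹ := by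
      funext x; rw [div_eq_mul_inv]
    rw [he]
    convert h1 using 1
    field_simp
  exact h2.deriv

private lemma aux_deriv_gt (a b : ℝ) (F : ℝ → ℝ → ℝ)
    (hF : ∀ b v, F b v = if v ≤ b then 1 - a/v else (1 - a/b) + a/b^2 * (v - b))
    {v : ℝ} (hvb : b < v) : deriv (F b) v = a / b ^ 2 := by
  have hev : F b =ᶠ[nhds v] fun x => (1 - a/b) + a/b^2 * (x - b) := by
    filter_upwards [Ioi_mem_nhds hvb] with x hx
    rw [hF, if_neg (not_le.mpr hx)]
  rw [hev.deriv_eq]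
  have h1 : HasDerivAt (fun x : ℝ => (1 - a/b) + a/b^2 * (x - b)) (a/b^2 * 1) v :=
    (((hasDerivAt_id v).sub_const b).const_mul (a/b^2)).const_add (1 - a/b)
  simpa using h1.deriv

private lemma aux_ae_ne (c : ℝ) : ∀ᵐ x : ℝ, x ≠ c := by
  rw [ae_iff]
  have : {x : ℝ | ¬ x ≠ c} = {c} := by ext x; simp [not_not]
  rw [this]
  exact measure_singleton c

/-- FTC helper: integral of `(v - a) * c` -/
private lemma aux_int_lin (a c p q : ℝ) :
    ∫ v in p..q, (v - a) * c = (q - a)^2/2 * c - (p - a)^2/2 * c := by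
  have hft : ∀ x ∈ uIcc p q, HasDerivAt (fun v => (v - a)^2/2 * c) ((x - a) * c) x := by
    intro x _
    have h : HasDerivAt (fun v : ℝ => (v - a)^2/2 * c) (↑2 * (x - a) ^ (2 - 1) * 1 / 2 * c) x := ((((hasDerivAt_id x).sub_const a).fun_pow 2).div_const 2).mul_const c
    convert h using 1
    ring
  rw [intervalIntegral.integral_eq_sub_of_hasDerivAt hft
    (((continuous_id.sub continuous_const).mul continuous_const).intervalIntegrable _ _)]

theorem stmt18 (a : ℝ) (ha : 0 < a)
    (F : ℝ → ℝ → ℝ)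
    (hF : ∀ b v, F b v = if v ≤ b then 1 - a/v else (1 - a/b) + a/b^2 * (v - b))
    (GFT FB : ℝ → ℝ)
    (hGFT : ∀ b, GFT b = ∫ v in a..(2*b),
        (if a + (1 - F b v) / deriv (F b) v ≤ v then v - a else 0) * deriv (F b) v)
    (hFB : ∀ b, FB b = ∫ v in a..(2*b), (v - a) * deriv (F b) v) :
    (∀ b, a < b → GFT b = 3*a*(a - 2*b)^2/(8*b^2)) ∧
    (∀ b, a < b → FB b = a*(Real.log (b/a) + a/b - 1) + (3*a/2 - a^2/b)) ∧
    Tendsto (fun b => GFT b / FB b) atTop (nhds 0) := by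
  have hG : ∀ b, a < b → GFT b = 3*a*(a - 2*b)^2/(8*b^2) := by
    intro b hab
    have hb0 : 0 < b := ha.trans hab
    have h2b : a < 2*b := by linarith
    set m : ℝ := (a + 2*b)/2 with hm
    have hbm : b < m := by rw [hm]; linarith
    have hm2 : m < 2*b := by rw [hm]; linarith
    have ham : a < m := hab.trans hbm
    rw [hGFT]
    set g : ℝ → ℝ := fun v => if m ≤ v then (v - a) * (a/b^2) else 0 with hg
    have hcong : ∀ᵐ v : ℝ, v ∈ uIoc a (2*b) →
        (if a + (1 - F b v) / deriv (F b) v ≤ v then v - a else 0) * deriv (F b) v = g v := by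
      filter_upwards [aux_ae_ne b] with v hvb hv
      rw [uIoc_of_le h2b.le] at hv
      rcases lt_or_gt_of_ne hvb with h | h
      · -- a < v < b
        have hv0 : 0 < v := ha.trans hv.1
        have hd := aux_deriv_lt a b F hF hv0 h
        have hFv : F b v = 1 - a / v := by rw [hF, if_pos h.le]
        have hratio : (1 - F b v) / deriv (F b) v = v := by
          rw [hd, hFv]
          field_simp
          ring
        rw [if_neg (by rw [hratio]; linarith), hg]
        simp only [zero_mul]
        rw [if_neg (by push_neg; exact h.trans hbm)]
      · -- b < v
        have hd := aux_deriv_gt a b F hF h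
        have hFv : F b v = (1 - a/b) + a/b^2 * (v - b) := by
          rw [hF, if_neg (not_le.mpr h)]
        have hratio : (1 - F b v) / deriv (F b) v = 2*b - v := by
          rw [hd, hFv]
          field_simp
          ring
        rw [hratio, hd, hg]
        by_cases hmc : m ≤ v
        · rw [if_pos (show a + (2*b - v) ≤ v by rw [hm] at hmc; linarith)]
          simp [hmc]
        · rw [if_neg (show ¬ a + (2*b - v) ≤ v by rw [hm] at hmc; push_neg at hmc ⊢; linarith)]
          simp [hmc]
    rw [intervalIntegral.integral_congr_ae hcong]
    have hi2 : IntervalIntegrable g volume m (2*b) := by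
      apply IntervalIntegrable.congr_ae
        (f := fun v => (v - a) * (a/b^2))
        (((continuous_id.sub continuous_const).mul continuous_const).intervalIntegrable _ _)
      filter_upwards [ae_restrict_mem measurableSet_uIoc] with x hx
      rw [uIoc_of_le hm2.le] at hx
      rw [hg]
      simp only
      rw [if_pos hx.1.le]
    have hi1 : IntervalIntegrable g volume a m := by
      apply IntervalIntegrable.congr_ae (f := fun _ => (0:ℝ)) (intervalIntegrable_const)
      rw [Filter.EventuallyEq, ae_restrict_iff' measurableSet_uIoc]
      filter_upwards [aux_ae_ne m] with x hxm hx
      rw [uIoc_of_le ham.le] at hx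
      rw [hg]
      simp only
      rw [if_neg (fun hc => hxm (le_antisymm hx.2 hc))]
    rw [← intervalIntegral.integral_add_adjacent_intervals hi1 hi2]
    have e1 : ∫ v in a..m, g v = 0 := by
      rw [intervalIntegral.integral_congr_ae (g := fun _ => (0:ℝ)) ?_]
      · simp
      · filter_upwards [aux_ae_ne m] with x hxm hx
        rw [uIoc_of_le ham.le] at hx
        rw [hg]
        simp only
        rw [if_neg (fun hc => hxm (le_antisymm hx.2 hc))]
    have e2 : ∫ v in m..(2*b), g v = ∫ v in m..(2*b), (v - a) * (a/b^2) := by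
      apply intervalIntegral.integral_congr
      intro x hx
      rw [uIcc_of_le hm2.le] at hx
      rw [hg]
      simp only
      rw [if_pos hx.1]
    rw [e1, e2, aux_int_lin, zero_add, hm]
    field_simp
    ring
  have hFBc : ∀ b, a < b → FB b = a*(Real.log (b/a) + a/b - 1) + (3*a/2 - a^2/b) := by
    intro b hab
    have hb0 : 0 < b := ha.trans hab
    have h2b : a < 2*b := by linarith
    have hb2 : b < 2*b := by linarith
    rw [hFB]
    set k : ℝ → ℝ := fun v => if v ≤ b then (v - a) * (a/v^2) else (v - a) * (a/b^2) with hk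
    have hcong : ∀ᵐ v : ℝ, v ∈ uIoc a (2*b) → (v - a) * deriv (F b) v = k v := by
      filter_upwards [aux_ae_ne b] with v hvb hv
      rw [uIoc_of_le h2b.le] at hv
      rcases lt_or_gt_of_ne hvb with h | h
      · have hv0 : 0 < v := ha.trans hv.1
        rw [aux_deriv_lt a b F hF hv0 h, hk]
        simp only
        rw [if_pos h.le]
      · rw [aux_deriv_gt a b F hF h, hk]
        simp only
        rw [if_neg (not_le.mpr h)]
    rw [intervalIntegral.integral_congr_ae hcong]
    have hconts : ContinuousOn (fun v : ℝ => (v - a) * (a/v^2)) (uIcc a b) := by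
      apply ContinuousOn.mul (by fun_prop)
      apply ContinuousOn.div continuousOn_const (by fun_prop)
      intro x hx
      rw [uIcc_of_le hab.le] at hx
      exact pow_ne_zero 2 (ne_of_gt (lt_of_lt_of_le ha hx.1))
    have hi1 : IntervalIntegrable k volume a b := by
      apply IntervalIntegrable.congr_ae (f := fun v => (v - a) * (a/v^2))
        (hconts.intervalIntegrable)
      filter_upwards [ae_restrict_mem measurableSet_uIoc] with x hx
      rw [uIoc_of_le hab.le] at hx
      rw [hk]
      simp only
      rw [if_pos hx.2]
    have hi2 : IntervalIntegrable k volume b (2*b) := by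
      apply IntervalIntegrable.congr_ae (f := fun v => (v - a) * (a/b^2))
        (((continuous_id.sub continuous_const).mul continuous_const).intervalIntegrable _ _)
      filter_upwards [ae_restrict_mem measurableSet_uIoc] with x hx
      rw [uIoc_of_le hb2.le] at hx
      rw [hk]
      simp only
      rw [if_neg (not_le.mpr hx.1)]
    rw [← intervalIntegral.integral_add_adjacent_intervals hi1 hi2]
    have e1 : ∫ v in a..b, k v = a * Real.log b + a^2/b - (a * Real.log a + a^2/a) := by
      have ec : ∫ v in a..b, k v = ∫ v in a..b, (v - a) * (a/v^2) := by
        apply intervalIntegral.integral_congr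
        intro x hx
        rw [uIcc_of_le hab.le] at hx
        rw [hk]
        simp only
        rw [if_pos hx.2]
      rw [ec]
      have hft : ∀ x ∈ uIcc a b, HasDerivAt (fun v => a * Real.log v + a^2/v)
          ((x - a) * (a/x^2)) x := by
        intro x hx
        rw [uIcc_of_le hab.le] at hx
        have hx0 : 0 < x := lt_of_lt_of_le ha hx.1
        have h1 : HasDerivAt (fun v : ℝ => a * Real.log v + a^2 * v⁻¹)
            (a * x⁻¹ + a^2 * -(x^2)⁻¹) x :=
          ((Real.hasDerivAt_log hx0.ne').const_mul a).add
            ((hasDerivAt_inv hx0.ne').const_mul (a^2))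
        have he : (fun v : ℝ => a * Real.log v + a^2/v)
            = fun v : ℝ => a * Real.log v + a^2 * v⁻¹ := by
          funext v; rw [div_eq_mul_inv]
        rw [he]
        convert h1 using 1
        field_simp
        ring
      rw [intervalIntegral.integral_eq_sub_of_hasDerivAt hft hconts.intervalIntegrable]
    have e2 : ∫ v in b..(2*b), k v = ∫ v in b..(2*b), (v - a) * (a/b^2) := by
      apply intervalIntegral.integral_congr
      intro x hx
      rw [uIcc_of_le hb2.le] at hx
      rw [hk]
      simp only
      by_cases hc : x ≤ b
      · have : x = b := le_antisymm hc hx.1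
        rw [if_pos hc, this]
      · rw [if_neg hc]
    rw [e1, e2, aux_int_lin]
    rw [Real.log_div hb0.ne' ha.ne']
    field_simp
    ring
  refine ⟨hG, hFBc, ?_⟩
  have hev : ∀ᶠ b in atTop, GFT b / FB b
      = (3*a/8 * (a/b - 2)^2) / (a * Real.log (b/a) + a/2) := by
    filter_upwards [eventually_gt_atTop a] with b hb
    have hb0 : 0 < b := ha.trans hb
    rw [hG b hb, hFBc b hb]
    congr 1
    · field_simp
    · field_simp
      ring
  rw [tendsto_congr' hev]
  have h1 : Tendsto (fun b : ℝ => 3*a/8 * (a/b - 2)^2) atTop (nhds (3*a/2)) := by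
    have hb : Tendsto (fun b : ℝ => a/b) atTop (nhds 0) :=
      tendsto_const_nhds.div_atTop tendsto_id
    have := (((hb.sub_const 2).pow 2).const_mul (3*a/8))
    convert this using 2
    norm_num
    ring
  have h2 : Tendsto (fun b : ℝ => a * Real.log (b/a) + a/2) atTop atTop := by
    apply tendsto_atTop_add_const_right
    apply Tendsto.const_mul_atTop ha
    exact Real.tendsto_log_atTop.comp (tendsto_id.atTop_div_const ha)
  exact h1.div_atTop h2
end
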